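/- arXiv:1705.07411 — 8 statements merged into one kernel-verified Lean document; each statement's English description precedes it below -/
import Mathlib

section
/- Let $m \geq 1$, let $r_v \geq 1$ for $v \in [m]$, and let $A, B, C \subseteq [m]$ be pairwise disjoint with $A, B$ nonempty; set $D = [m] \setminus (A \cup B \cup C)$. In the polynomial ring $\mathbb{R}[p_x : x \in \prod_{v \in [m]} [r_v]]$, for indices $i_A \in \mathcal{R}_A$, $i_B \in \mathcal{R}_B$, $i_C \in \mathcal{R}_C$ let $q(i_A,i_B,i_C) := \sum_{i_D \in \mathcal{R}_D} p_{(i_A,i_B,i_C,i_D)}$. Then the conditional independence ideal $I_{A \perp B \mid C}$, generated by all polynomials $q(i_A,i_B,i_C)\,q(j_A,j_B,i_C) - q(i_A,j_B,i_C)\,q(j_A,i_B,i_C)$ for $i_A,j_A \in \mathcal{R}_A$, $i_B,j_B \in \mathcal{R}_B$, $i_C \in \mathcal{R}_C$, is a prime ideal. -/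
open MvPolynomial

/-- The formal marginalization over the coordinates outside `A ∪ B ∪ C`:
`q z = ∑_{x : x agrees with z on A ∪ B ∪ C} p_x`. -/
noncomputable def margin {m : ℕ} {r : Fin m → ℕ} (A B C : Finset (Fin m))
    (z : (v : Fin m) → Fin (r v)) :
    MvPolynomial ((v : Fin m) → Fin (r v)) ℝ :=
  ∑ x ∈ Finset.univ.filter (fun x : (v : Fin m) → Fin (r v) =>
      ∀ v ∈ A ∪ B ∪ C, x v = z v), X x

/-- Combine three tuples: take the `A`-coordinates from `u`, the `B`-coordinates
from `v`, and the remaining coordinates from `w`. -/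
def mix {m : ℕ} {r : Fin m → ℕ} (A B : Finset (Fin m))
    (u v w : (k : Fin m) → Fin (r k)) : (k : Fin m) → Fin (r k) :=
  fun k => if k ∈ A then u k else if k ∈ B then v k else w k

namespace CIaux

variable {m : ℕ} {r : Fin m → ℕ}

/-- the all-zeros tuple -/
def z0 (hr : ∀ v, 1 ≤ r v) : (v : Fin m) → Fin (r v) := fun v => ⟨0, hr v⟩

section defs
variable (A B C : Finset (Fin m)) (hr : ∀ v, 1 ≤ r v)

/-- `x` is *starred*: zero outside `A ∪ B ∪ C`. -/
def strd (x : (v : Fin m) → Fin (r v)) : Prop :=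
  ∀ v : Fin m, v ∉ A ∪ B ∪ C → x v = z0 hr v

instance : DecidablePred (strd A B C hr) := fun _ => by unfold strd; infer_instance

/-- zero out the coordinates outside `A ∪ B ∪ C` -/
def star (z : (v : Fin m) → Fin (r v)) : (v : Fin m) → Fin (r v) :=
  fun v => if v ∈ A ∪ B ∪ C then z v else z0 hr v

/-- zero out the `B`-coordinates -/
def pA (x : (v : Fin m) → Fin (r v)) : (v : Fin m) → Fin (r v) :=
  fun v => if v ∈ B then z0 hr v else x v

/-- zero out the `A`-coordinates -/
def pB (x : (v : Fin m) → Fin (r v)) : (v : Fin m) → Fin (r v) :=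
  fun v => if v ∈ A then z0 hr v else x v

/-- take `B`-coordinates from `y`, the rest from `x` -/
def comb (x y : (v : Fin m) → Fin (r v)) : (v : Fin m) → Fin (r v) :=
  fun v => if v ∈ B then y v else x v

/-- substitution sending the distinguished variable of each marginal class to
(variable minus the rest of the class) -/
noncomputable def alf : ((v : Fin m) → Fin (r v)) → MvPolynomial ((v : Fin m) → Fin (r v)) ℝ :=
  fun y => if strd A B C hr y then
      X y - ∑ x ∈ Finset.univ.filter
        (fun x => (∀ v ∈ A ∪ B ∪ C, x v = y v) ∧ ¬ strd A B C hr x), X x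
    else X y

noncomputable def bet : ((v : Fin m) → Fin (r v)) → MvPolynomial ((v : Fin m) → Fin (r v)) ℝ :=
  fun y => if strd A B C hr y then
      X y + ∑ x ∈ Finset.univ.filter
        (fun x => (∀ v ∈ A ∪ B ∪ C, x v = y v) ∧ ¬ strd A B C hr x), X x
    else X y

end defs

section lems
variable {A B C : Finset (Fin m)} {hr : ∀ v, 1 ≤ r v}

lemma strd_star (z : (v : Fin m) → Fin (r v)) : strd A B C hr (star A B C hr z) := by
  intro v hv; unfold star; rw [if_neg hv]

lemma star_eq_self {z : (v : Fin m) → Fin (r v)} (h : strd A B C hr z) :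
    star A B C hr z = z := by
  funext v
  unfold star
  by_cases hv : v ∈ A ∪ B ∪ C
  · rw [if_pos hv]
  · rw [if_neg hv, h v hv]

lemma star_agree (z : (v : Fin m) → Fin (r v)) :
    ∀ v ∈ A ∪ B ∪ C, star A B C hr z v = z v := fun v hv => by unfold star; rw [if_pos hv]

lemma strd_eq_star {x z : (v : Fin m) → Fin (r v)} (hx : strd A B C hr x)
    (hagree : ∀ v ∈ A ∪ B ∪ C, x v = z v) : x = star A B C hr z := by
  funext v
  by_cases hv : v ∈ A ∪ B ∪ C
  · rw [star_agree z v hv]; exact hagree v hv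
  · rw [hx v hv]; unfold star; rw [if_neg hv]

lemma alf_strd {y : (v : Fin m) → Fin (r v)} (h : strd A B C hr y) :
    alf A B C hr y = X y - ∑ x ∈ Finset.univ.filter
        (fun x => (∀ v ∈ A ∪ B ∪ C, x v = y v) ∧ ¬ strd A B C hr x), X x := by
  unfold alf; rw [if_pos h]

lemma alf_nstrd {y : (v : Fin m) → Fin (r v)} (h : ¬ strd A B C hr y) :
    alf A B C hr y = X y := by unfold alf; rw [if_neg h]

lemma bet_strd {y : (v : Fin m) → Fin (r v)} (h : strd A B C hr y) :
    bet A B C hr y = X y + ∑ x ∈ Finset.univ.filter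
        (fun x => (∀ v ∈ A ∪ B ∪ C, x v = y v) ∧ ¬ strd A B C hr x), X x := by
  unfold bet; rw [if_pos h]

lemma bet_nstrd {y : (v : Fin m) → Fin (r v)} (h : ¬ strd A B C hr y) :
    bet A B C hr y = X y := by unfold bet; rw [if_neg h]

lemma aeval_bet_alf (y : (v : Fin m) → Fin (r v)) :
    aeval (R := ℝ) (bet A B C hr) (alf A B C hr y) = X y := by
  by_cases h : strd A B C hr y
  · rw [alf_strd h, map_sub, map_sum, aeval_X, bet_strd h]
    have hs : ∀ x ∈ Finset.univ.filter
        (fun x => (∀ v ∈ A ∪ B ∪ C, x v = y v) ∧ ¬ strd A B C hr x),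
        aeval (R := ℝ) (bet A B C hr) (X x) = X x := fun x hx => by
      rw [aeval_X, bet_nstrd (Finset.mem_filter.mp hx).2.2]
    rw [Finset.sum_congr rfl hs]; ring
  · rw [alf_nstrd h, aeval_X, bet_nstrd h]

lemma aeval_alf_bet (y : (v : Fin m) → Fin (r v)) :
    aeval (R := ℝ) (alf A B C hr) (bet A B C hr y) = X y := by
  by_cases h : strd A B C hr y
  · rw [bet_strd h, map_add, map_sum, aeval_X, alf_strd h]
    have hs : ∀ x ∈ Finset.univ.filter
        (fun x => (∀ v ∈ A ∪ B ∪ C, x v = y v) ∧ ¬ strd A B C hr x),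
        aeval (R := ℝ) (alf A B C hr) (X x) = X x := fun x hx => by
      rw [aeval_X, alf_nstrd (Finset.mem_filter.mp hx).2.2]
    rw [Finset.sum_congr rfl hs]; ring
  · rw [bet_nstrd h, aeval_X, alf_nstrd h]

/-- the change-of-variables automorphism -/
noncomputable def chg (A B C : Finset (Fin m)) (hr : ∀ v, 1 ≤ r v) :
    MvPolynomial ((v : Fin m) → Fin (r v)) ℝ ≃ₐ[ℝ] MvPolynomial ((v : Fin m) → Fin (r v)) ℝ :=
  AlgEquiv.ofAlgHom (aeval (R := ℝ) (alf A B C hr)) (aeval (R := ℝ) (bet A B C hr))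
    (by apply MvPolynomial.algHom_ext; intro y
        simp only [AlgHom.comp_apply, aeval_X, AlgHom.id_apply]
        exact aeval_alf_bet y)
    (by apply MvPolynomial.algHom_ext; intro y
        simp only [AlgHom.comp_apply, aeval_X, AlgHom.id_apply]
        exact aeval_bet_alf y)

lemma chg_margin (z : (v : Fin m) → Fin (r v)) :
    chg A B C hr (margin A B C z) = X (star A B C hr z) := by
  show aeval (R := ℝ) (alf A B C hr) (margin A B C z) = _
  unfold margin
  rw [map_sum]
  have hmem : star A B C hr z ∈ Finset.univ.filter
      (fun x : (v : Fin m) → Fin (r v) => ∀ v ∈ A ∪ B ∪ C, x v = z v) := by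
    simp only [Finset.mem_filter, Finset.mem_univ, true_and]
    exact star_agree z
  rw [← Finset.add_sum_erase _ _ hmem]
  have h1 : aeval (R := ℝ) (alf A B C hr) (X (star A B C hr z)) =
      X (star A B C hr z) - ∑ x ∈ Finset.univ.filter
        (fun x => (∀ v ∈ A ∪ B ∪ C, x v = star A B C hr z v) ∧ ¬ strd A B C hr x), X x := by
    rw [aeval_X, alf_strd (strd_star z)]
  have hsets : (Finset.univ.filter
        (fun x => (∀ v ∈ A ∪ B ∪ C, x v = star A B C hr z v) ∧ ¬ strd A B C hr x)) =
      (Finset.univ.filter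
        (fun x : (v : Fin m) → Fin (r v) => ∀ v ∈ A ∪ B ∪ C, x v = z v)).erase
        (star A B C hr z) := by
    ext x
    simp only [Finset.mem_filter, Finset.mem_univ, true_and, Finset.mem_erase]
    constructor
    · rintro ⟨hag, hns⟩
      refine ⟨fun hx => hns (hx ▸ strd_star z), fun v hv => (hag v hv).trans (star_agree z v hv)⟩
    · rintro ⟨hne, hag⟩
      refine ⟨fun v hv => (hag v hv).trans (star_agree z v hv).symm, fun hs => hne ?_⟩
      exact strd_eq_star hs hag
  have h2 : ∀ x ∈ (Finset.univ.filter
        (fun x : (v : Fin m) → Fin (r v) => ∀ v ∈ A ∪ B ∪ C, x v = z v)).erase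
        (star A B C hr z), aeval (R := ℝ) (alf A B C hr) (X x) = X x := by
    intro x hx
    rw [aeval_X, alf_nstrd]
    intro hs
    rw [Finset.mem_erase] at hx
    exact hx.1 (strd_eq_star hs (Finset.mem_filter.mp hx.2).2)
  rw [h1, hsets, Finset.sum_congr rfl h2]
  ring

end lems

section multi

lemma filterMap_add' {α β : Type*} (f : α → Option β) (s t : Multiset α) :
    (s + t).filterMap f = s.filterMap f + t.filterMap f := by
  induction s using Multiset.induction_on with
  | empty => simp
  | cons a s ih =>
    cases hfa : f a with
    | none =>
      rw [Multiset.cons_add, Multiset.filterMap_cons_none _ _ hfa,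
        Multiset.filterMap_cons_none _ _ hfa, ih]
    | some b =>
      rw [Multiset.cons_add, Multiset.filterMap_cons_some _ _ _ hfa,
        Multiset.filterMap_cons_some _ _ _ hfa, ih, Multiset.cons_add]

lemma filterMap_congr' {α β : Type*} {f g : α → Option β} {s : Multiset α}
    (h : ∀ a ∈ s, f a = g a) : s.filterMap f = s.filterMap g := by
  induction s using Multiset.induction_on with
  | empty => rfl
  | cons a s ih =>
    have h1 : f a = g a := h a (Multiset.mem_cons_self a s)
    have ih' := ih (fun x hx => h x (Multiset.mem_cons_of_mem hx))
    cases hfa : f a with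
    | none =>
      rw [Multiset.filterMap_cons_none _ _ hfa,
        Multiset.filterMap_cons_none _ _ (h1.symm.trans hfa), ih']
    | some b =>
      rw [Multiset.filterMap_cons_some _ _ _ hfa,
        Multiset.filterMap_cons_some _ _ _ (h1.symm.trans hfa), ih']

lemma filterMap_none' {α β : Type*} (s : Multiset α) :
    s.filterMap (fun _ => (none : Option β)) = 0 := by
  induction s using Multiset.induction_on with
  | empty => rfl
  | cons a s ih => rw [Multiset.filterMap_cons_none _ _ rfl, ih]

lemma filterMap_some' {α β : Type*} (f : α → β) (s : Multiset α) :
    s.filterMap (fun a => some (f a)) = s.map f := by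
  have := Multiset.filterMap_eq_map f
  exact congrFun this s

lemma filterMap_idsome {α : Type*} (s : Multiset α) : s.filterMap some = s := by
  induction s using Multiset.induction_on with
  | empty => rfl
  | cons a s ih => rw [Multiset.filterMap_cons_some _ _ _ rfl, ih]

/-- monomial attached to a multiset of variables -/
noncomputable def Mset {τ : Type*} [DecidableEq τ] (s : Multiset τ) : MvPolynomial τ ℝ :=
  monomial (Multiset.toFinsupp s) 1

lemma Mset_zero {τ : Type*} [DecidableEq τ] : Mset (0 : Multiset τ) = 1 := by
  unfold Mset
  rw [Multiset.toFinsupp_zero, monomial_zero']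
  exact C_1

lemma Mset_cons {τ : Type*} [DecidableEq τ] (a : τ) (s : Multiset τ) :
    Mset (a ::ₘ s) = X a * Mset s := by
  unfold Mset
  rw [← Multiset.singleton_add, Multiset.toFinsupp_add, Multiset.toFinsupp_singleton]
  show _ = monomial (Finsupp.single a 1) 1 * _
  rw [monomial_mul, one_mul]

lemma Mset_add {τ : Type*} [DecidableEq τ] (s t : Multiset τ) :
    Mset (s + t) = Mset s * Mset t := by
  unfold Mset
  rw [Multiset.toFinsupp_add, monomial_mul, one_mul]

end multi

section phi
variable (A B C : Finset (Fin m)) (hr : ∀ v, 1 ≤ r v)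

/-- the Segre-type monomial substitution -/
noncomputable def phiF : ((v : Fin m) → Fin (r v)) →
    MvPolynomial (((v : Fin m) → Fin (r v)) ⊕ ((v : Fin m) → Fin (r v))) ℝ := fun y =>
  if strd A B C hr y then X (Sum.inl (pA B hr y)) * X (Sum.inr (pB A hr y))
  else X (Sum.inl y)

noncomputable def phi :
    MvPolynomial ((v : Fin m) → Fin (r v)) ℝ →ₐ[ℝ]
    MvPolynomial (((v : Fin m) → Fin (r v)) ⊕ ((v : Fin m) → Fin (r v))) ℝ :=
  aeval (phiF A B C hr)

/-- the image multiset of a monomial multiset under `phi` -/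
def PhiM (s : Multiset ((v : Fin m) → Fin (r v))) :
    Multiset (((v : Fin m) → Fin (r v)) ⊕ ((v : Fin m) → Fin (r v))) :=
  (s.filter (strd A B C hr)).map (fun y => Sum.inl (pA B hr y)) +
  (s.filter (strd A B C hr)).map (fun y => Sum.inr (pB A hr y)) +
  (s.filter (fun y => ¬ strd A B C hr y)).map Sum.inl

lemma phi_Mset (s : Multiset ((v : Fin m) → Fin (r v))) :
    phi A B C hr (Mset s) = Mset (PhiM A B C hr s) := by
  induction s using Multiset.induction_on with
  | empty =>
    show phi A B C hr (Mset 0) = _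
    rw [Mset_zero, map_one]
    unfold PhiM
    simp only [Multiset.filter_zero, Multiset.map_zero, add_zero]
    rw [Mset_zero]
  | cons a s ih =>
    rw [Mset_cons, map_mul, ih]
    show aeval (phiF A B C hr) (X a) * _ = _
    rw [aeval_X]
    unfold phiF
    by_cases h : strd A B C hr a
    · rw [if_pos h]
      have hP : PhiM A B C hr (a ::ₘ s) =
          Sum.inl (pA B hr a) ::ₘ Sum.inr (pB A hr a) ::ₘ PhiM A B C hr s := by
        unfold PhiM
        rw [Multiset.filter_cons_of_pos _ h,
          Multiset.filter_cons_of_neg (p := fun y => ¬ strd A B C hr y) _ (not_not_intro h)]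
        simp only [Multiset.map_cons, ← Multiset.singleton_add, Multiset.map_add, Multiset.map_singleton]
        abel
      rw [hP, Mset_cons, Mset_cons]
      ring
    · rw [if_neg h]
      have hP : PhiM A B C hr (a ::ₘ s) = Sum.inl a ::ₘ PhiM A B C hr s := by
        unfold PhiM
        rw [Multiset.filter_cons_of_neg _ h,
          Multiset.filter_cons_of_pos (p := fun y => ¬ strd A B C hr y) _ h]
        simp only [Multiset.map_cons, ← Multiset.singleton_add, Multiset.map_add, Multiset.map_singleton]
        abel
      rw [hP, Mset_cons]

lemma strd_pA {y : (v : Fin m) → Fin (r v)} (h : strd A B C hr y) :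
    strd A B C hr (pA B hr y) := by
  intro v hv
  unfold pA
  by_cases hvB : v ∈ B
  · rw [if_pos hvB]
  · rw [if_neg hvB, h v hv]

lemma strd_pB {y : (v : Fin m) → Fin (r v)} (h : strd A B C hr y) :
    strd A B C hr (pB A hr y) := by
  intro v hv
  unfold pB
  by_cases hvA : v ∈ A
  · rw [if_pos hvA]
  · rw [if_neg hvA, h v hv]

def g1 : (((v : Fin m) → Fin (r v)) ⊕ ((v : Fin m) → Fin (r v))) →
    Option ((v : Fin m) → Fin (r v)) :=
  Sum.elim (fun a => if strd A B C hr a then some a else none) (fun _ => none)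

def g2 : (((v : Fin m) → Fin (r v)) ⊕ ((v : Fin m) → Fin (r v))) →
    Option ((v : Fin m) → Fin (r v)) :=
  Sum.elim (fun a => if strd A B C hr a then none else some a) (fun _ => none)

def g3 : (((v : Fin m) → Fin (r v)) ⊕ ((v : Fin m) → Fin (r v))) →
    Option ((v : Fin m) → Fin (r v)) :=
  Sum.elim (fun _ => none) some

lemma E1 (s : Multiset ((v : Fin m) → Fin (r v))) :
    (PhiM A B C hr s).filterMap (g1 A B C hr) =
      (s.filter (strd A B C hr)).map (pA B hr) := by
  unfold PhiM
  rw [filterMap_add', filterMap_add', Multiset.filterMap_map, Multiset.filterMap_map,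
    Multiset.filterMap_map]
  have h1 := filterMap_congr' (s := Multiset.filter (strd A B C hr) s)
      (f := (g1 A B C hr) ∘ fun y => Sum.inl (pA B hr y)) (g := fun y => some (pA B hr y))
      (fun a ha => by
        show g1 A B C hr (Sum.inl (pA B hr a)) = some (pA B hr a)
        unfold g1
        rw [Sum.elim_inl, if_pos (strd_pA A B C hr (Multiset.of_mem_filter ha))])
  have h2 := filterMap_congr' (s := Multiset.filter (strd A B C hr) s)
      (f := (g1 A B C hr) ∘ fun y => Sum.inr (pB A hr y)) (g := fun _ => none)
      (fun a _ => rfl)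
  have h3 := filterMap_congr' (s := Multiset.filter (fun y => ¬ strd A B C hr y) s)
      (f := (g1 A B C hr) ∘ Sum.inl) (g := fun _ => none)
      (fun a ha => by
        have hna := (Multiset.mem_filter.mp ha).2
        show g1 A B C hr (Sum.inl a) = none
        unfold g1
        rw [Sum.elim_inl, if_neg hna])
  rw [h1, h2, h3, filterMap_some', filterMap_none', filterMap_none', add_zero, add_zero]

lemma E2 (s : Multiset ((v : Fin m) → Fin (r v))) :
    (PhiM A B C hr s).filterMap (g3 (m := m) (r := r)) =
      (s.filter (strd A B C hr)).map (pB A hr) := by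
  unfold PhiM
  rw [filterMap_add', filterMap_add', Multiset.filterMap_map, Multiset.filterMap_map,
    Multiset.filterMap_map]
  have h1 := filterMap_congr' (s := Multiset.filter (strd A B C hr) s)
      (f := (g3 (m := m) (r := r)) ∘ fun y => Sum.inl (pA B hr y)) (g := fun _ => none)
      (fun a _ => rfl)
  have h2 := filterMap_congr' (s := Multiset.filter (strd A B C hr) s)
      (f := (g3 (m := m) (r := r)) ∘ fun y => Sum.inr (pB A hr y))
      (g := fun y => some (pB A hr y)) (fun a _ => rfl)
  have h3 := filterMap_congr' (s := Multiset.filter (fun y => ¬ strd A B C hr y) s)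
      (f := (g3 (m := m) (r := r)) ∘ Sum.inl) (g := fun _ => none) (fun a _ => rfl)
  rw [h1, h2, h3, filterMap_some', filterMap_none', filterMap_none', add_zero, zero_add]

lemma E3 (s : Multiset ((v : Fin m) → Fin (r v))) :
    (PhiM A B C hr s).filterMap (g2 A B C hr) =
      s.filter (fun y => ¬ strd A B C hr y) := by
  unfold PhiM
  rw [filterMap_add', filterMap_add', Multiset.filterMap_map, Multiset.filterMap_map,
    Multiset.filterMap_map]
  have h1 := filterMap_congr' (s := Multiset.filter (strd A B C hr) s)
      (f := (g2 A B C hr) ∘ fun y => Sum.inl (pA B hr y)) (g := fun _ => none)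
      (fun a ha => by
        show g2 A B C hr (Sum.inl (pA B hr a)) = none
        unfold g2
        rw [Sum.elim_inl, if_pos (strd_pA A B C hr (Multiset.of_mem_filter ha))])
  have h2 := filterMap_congr' (s := Multiset.filter (strd A B C hr) s)
      (f := (g2 A B C hr) ∘ fun y => Sum.inr (pB A hr y)) (g := fun _ => none)
      (fun a _ => rfl)
  have h3 := filterMap_congr' (s := Multiset.filter (fun y => ¬ strd A B C hr y) s)
      (f := (g2 A B C hr) ∘ Sum.inl) (g := some)
      (fun a ha => by
        have hna := (Multiset.mem_filter.mp ha).2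
        show g2 A B C hr (Sum.inl a) = some a
        unfold g2
        rw [Sum.elim_inl, if_neg hna])
  rw [h1, h2, h3, filterMap_none', filterMap_idsome, zero_add, zero_add]

lemma PhiM_parts {s s' : Multiset ((v : Fin m) → Fin (r v))}
    (h : PhiM A B C hr s = PhiM A B C hr s') :
    (s.filter (strd A B C hr)).map (pA B hr) = (s'.filter (strd A B C hr)).map (pA B hr) ∧
    (s.filter (strd A B C hr)).map (pB A hr) = (s'.filter (strd A B C hr)).map (pB A hr) ∧
    s.filter (fun y => ¬ strd A B C hr y) = s'.filter (fun y => ¬ strd A B C hr y) := by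
  refine ⟨?_, ?_, ?_⟩
  · rw [← E1 A B C hr s, h, E1 A B C hr s']
  · rw [← E2 A B C hr s, h, E2 A B C hr s']
  · rw [← E3 A B C hr s, h, E3 A B C hr s']

end phi

section key
variable {A B C : Finset (Fin m)} {hr : ∀ v, 1 ≤ r v}

lemma pApB_inj (hAB : Disjoint A B) {x y : (v : Fin m) → Fin (r v)}
    (ha : pA B hr x = pA B hr y) (hb : pB A hr x = pB A hr y) : x = y := by
  funext v
  by_cases hvB : v ∈ B
  · have hvA : v ∉ A := Finset.disjoint_right.mp hAB hvB
    have := congrFun hb v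
    unfold pB at this
    rwa [if_neg hvA, if_neg hvA] at this
  · have := congrFun ha v
    unfold pA at this
    rwa [if_neg hvB, if_neg hvB] at this

lemma comb_eq (hAB : Disjoint A B) {z z₁ z₂ : (v : Fin m) → Fin (r v)}
    (h1 : pA B hr z₁ = pA B hr z) (h2 : pB A hr z₂ = pB A hr z) :
    comb B z₁ z₂ = z := by
  funext v
  unfold comb
  by_cases hvB : v ∈ B
  · rw [if_pos hvB]
    have hvA : v ∉ A := Finset.disjoint_right.mp hAB hvB
    have := congrFun h2 v
    unfold pB at this
    rwa [if_neg hvA, if_neg hvA] at this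
  · rw [if_neg hvB]
    have := congrFun h1 v
    unfold pA at this
    rwa [if_neg hvB, if_neg hvB] at this

lemma pA_comb (x y : (v : Fin m) → Fin (r v)) :
    pA B hr (comb B x y) = pA B hr x := by
  funext v
  unfold pA comb
  by_cases hvB : v ∈ B
  · rw [if_pos hvB, if_pos hvB]
  · rw [if_neg hvB, if_neg hvB, if_neg hvB]

lemma pB_comb (hAB : Disjoint A B) {z z₁ z₂ : (v : Fin m) → Fin (r v)}
    (h1 : pA B hr z₁ = pA B hr z) (h2 : pB A hr z₂ = pB A hr z) :
    pB A hr (comb B z₂ z₁) = pB A hr z₁ := by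
  funext v
  unfold pB comb
  by_cases hvA : v ∈ A
  · rw [if_pos hvA, if_pos hvA]
  · rw [if_neg hvA, if_neg hvA]
    by_cases hvB : v ∈ B
    · rw [if_pos hvB]
    · rw [if_neg hvB]
      have ha := congrFun h1 v
      unfold pA at ha
      rw [if_neg hvB, if_neg hvB] at ha
      have hb := congrFun h2 v
      unfold pB at hb
      rw [if_neg hvA, if_neg hvA] at hb
      rw [hb, ha]

lemma strd_comb {x y : (v : Fin m) → Fin (r v)} (hx : strd A B C hr x)
    (hy : strd A B C hr y) : strd A B C hr (comb B x y) := by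
  intro v hv
  unfold comb
  by_cases hvB : v ∈ B
  · rw [if_pos hvB, hy v hv]
  · rw [if_neg hvB, hx v hv]

/-- the key straightening lemma: two starred monomial multisets with the same
`pA`- and `pB`-marginals are congruent modulo any ideal containing the swaps -/
lemma key_swap (hAB : Disjoint A B) (J : Ideal (MvPolynomial ((v : Fin m) → Fin (r v)) ℝ))
    (hswap : ∀ z z₁ z₂ : (v : Fin m) → Fin (r v), strd A B C hr z → strd A B C hr z₁ →
      strd A B C hr z₂ → pA B hr z₁ = pA B hr z → pB A hr z₂ = pB A hr z →
      X z₁ * X z₂ - X (comb B z₁ z₂) * X (comb B z₂ z₁) ∈ J) :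
    ∀ (n : ℕ) (t t' : Multiset ((v : Fin m) → Fin (r v))), t.card = n →
    (∀ x ∈ t, strd A B C hr x) → (∀ x ∈ t', strd A B C hr x) →
    t.map (pA B hr) = t'.map (pA B hr) → t.map (pB A hr) = t'.map (pB A hr) →
    Mset t - Mset t' ∈ J := by
  intro n
  induction n with
  | zero =>
    intro t t' hc _ _ hpa _
    have ht : t = 0 := Multiset.card_eq_zero.mp hc
    have hc' : t'.card = 0 := by
      have h := congrArg Multiset.card hpa
      rw [Multiset.card_map, Multiset.card_map, hc] at h
      exact h.symm
    rw [ht, Multiset.card_eq_zero.mp hc', sub_self]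
    exact J.zero_mem
  | succ n ih =>
    intro t t' hc hst hst' hpa hpb
    obtain ⟨z, hz⟩ : ∃ z, z ∈ t := Multiset.card_pos_iff_exists_mem.mp (by
      rw [hc]; exact n.succ_pos)
    have step : ∀ t'' : Multiset ((v : Fin m) → Fin (r v)), z ∈ t'' →
        (∀ x ∈ t'', strd A B C hr x) →
        t.map (pA B hr) = t''.map (pA B hr) → t.map (pB A hr) = t''.map (pB A hr) →
        Mset t - Mset t'' ∈ J := by
      intro t'' hzt'' hst'' hpa'' hpb''
      have ht : t = z ::ₘ t.erase z := (Multiset.cons_erase hz).symm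
      have ht'' : t'' = z ::ₘ t''.erase z := (Multiset.cons_erase hzt'').symm
      have hpaE : (t.erase z).map (pA B hr) = (t''.erase z).map (pA B hr) := by
        have h := hpa''
        rw [ht, ht'', Multiset.map_cons, Multiset.map_cons] at h
        exact (Multiset.cons_inj_right _).mp h
      have hpbE : (t.erase z).map (pB A hr) = (t''.erase z).map (pB A hr) := by
        have h := hpb''
        rw [ht, ht'', Multiset.map_cons, Multiset.map_cons] at h
        exact (Multiset.cons_inj_right _).mp h
      have hcE : (t.erase z).card = n := by
        rw [Multiset.card_erase_of_mem hz, hc]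
        rfl
      have hmem := ih (t.erase z) (t''.erase z) hcE
        (fun x hx => hst x (Multiset.mem_of_mem_erase hx))
        (fun x hx => hst'' x (Multiset.mem_of_mem_erase hx))
        hpaE hpbE
      have heq : Mset t - Mset t'' = X z * (Mset (t.erase z) - Mset (t''.erase z)) := by
        rw [mul_sub, ← Mset_cons, ← Mset_cons, ← ht, ← ht'']
      rw [heq]
      exact Ideal.mul_mem_left _ _ hmem
    by_cases hzt' : z ∈ t'
    · exact step t' hzt' hst' hpa hpb
    · have hz1 : pA B hr z ∈ t'.map (pA B hr) := by
        rw [← hpa]; exact Multiset.mem_map_of_mem _ hz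
      obtain ⟨z₁, hz₁t, hz₁⟩ := Multiset.mem_map.mp hz1
      have hz2 : pB A hr z ∈ t'.map (pB A hr) := by
        rw [← hpb]; exact Multiset.mem_map_of_mem _ hz
      obtain ⟨z₂, hz₂t, hz₂⟩ := Multiset.mem_map.mp hz2
      have hz₁strd := hst' z₁ hz₁t
      have hz₂strd := hst' z₂ hz₂t
      have hzstrd := hst z hz
      have hne : z₁ ≠ z₂ := by
        intro he
        apply hzt'
        have : z₁ = z := pApB_inj hAB hz₁ (he ▸ hz₂)
        exact this ▸ hz₁t
      have hz₂e : z₂ ∈ t'.erase z₁ := (Multiset.mem_erase_of_ne hne.symm).mpr hz₂t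
      have ht' : t' = z₁ ::ₘ z₂ ::ₘ (t'.erase z₁).erase z₂ := by
        rw [Multiset.cons_erase hz₂e, Multiset.cons_erase hz₁t]
      set rest := (t'.erase z₁).erase z₂ with hrest
      set w₀ := comb B z₂ z₁ with hw₀
      have hcz : comb B z₁ z₂ = z := comb_eq hAB hz₁ hz₂
      have hgen : X z₁ * X z₂ - X z * X w₀ ∈ J := by
        have h := hswap z z₁ z₂ hzstrd hz₁strd hz₂strd hz₁ hz₂
        rwa [hcz] at h
      have h1 : Mset t' - Mset (z ::ₘ w₀ ::ₘ rest) ∈ J := by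
        rw [ht', Mset_cons, Mset_cons, Mset_cons, Mset_cons]
        have he : X z₁ * (X z₂ * Mset rest) - X z * (X w₀ * Mset rest)
            = (X z₁ * X z₂ - X z * X w₀) * Mset rest := by ring
        rw [he]
        exact Ideal.mul_mem_right _ _ hgen
      have hrestmem : ∀ x ∈ rest, x ∈ t' := fun x hx =>
        Multiset.mem_of_mem_erase (Multiset.mem_of_mem_erase hx)
      have hst'' : ∀ x ∈ (z ::ₘ w₀ ::ₘ rest), strd A B C hr x := by
        intro x hx
        rcases Multiset.mem_cons.mp hx with h | hx
        · exact h ▸ hzstrd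
        rcases Multiset.mem_cons.mp hx with h | hx
        · exact h ▸ strd_comb hz₂strd hz₁strd
        · exact hst' x (hrestmem x hx)
      have hpaw : pA B hr w₀ = pA B hr z₂ := pA_comb z₂ z₁
      have hpbw : pB A hr w₀ = pB A hr z₁ := pB_comb hAB hz₁ hz₂
      have hpa'' : t.map (pA B hr) = (z ::ₘ w₀ ::ₘ rest).map (pA B hr) := by
        rw [hpa, ht', Multiset.map_cons, Multiset.map_cons, Multiset.map_cons,
          Multiset.map_cons, hz₁, hpaw]
      have hpb'' : t.map (pB A hr) = (z ::ₘ w₀ ::ₘ rest).map (pB A hr) := by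
        rw [hpb, ht', Multiset.map_cons, Multiset.map_cons, Multiset.map_cons,
          Multiset.map_cons, hz₂, hpbw, Multiset.cons_swap]
      have h2 := step (z ::ₘ w₀ ::ₘ rest) (Multiset.mem_cons_self _ _) hst'' hpa'' hpb''
      have h3 := J.sub_mem h2 h1
      have he : (Mset t - Mset (z ::ₘ w₀ ::ₘ rest)) - (Mset t' - Mset (z ::ₘ w₀ ::ₘ rest))
          = Mset t - Mset t' := by ring
      rwa [he] at h3
lemma monomial_eq_Mset {τ : Type*} [DecidableEq τ] (d : τ →₀ ℕ) (c : ℝ) :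
    monomial d c = MvPolynomial.C c * Mset (Finsupp.toMultiset d) := by
  unfold Mset
  rw [Finsupp.toMultiset_toFinsupp, show (MvPolynomial.C c : MvPolynomial τ ℝ) = monomial 0 c from
    (congrFun monomial_zero' c).symm, monomial_mul, zero_add, mul_one]

lemma Mset_diff_mem (hAB : Disjoint A B) (J : Ideal (MvPolynomial ((v : Fin m) → Fin (r v)) ℝ))
    (hswap : ∀ z z₁ z₂ : (v : Fin m) → Fin (r v), strd A B C hr z → strd A B C hr z₁ →
      strd A B C hr z₂ → pA B hr z₁ = pA B hr z → pB A hr z₂ = pB A hr z →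
      X z₁ * X z₂ - X (comb B z₁ z₂) * X (comb B z₂ z₁) ∈ J)
    {s s' : Multiset ((v : Fin m) → Fin (r v))}
    (h : PhiM A B C hr s = PhiM A B C hr s') : Mset s - Mset s' ∈ J := by
  obtain ⟨h1, h2, h3⟩ := PhiM_parts A B C hr h
  have hkey := key_swap hAB J hswap (s.filter (strd A B C hr)).card
    (s.filter (strd A B C hr)) (s'.filter (strd A B C hr)) rfl
    (fun x hx => (Multiset.mem_filter.mp hx).2)
    (fun x hx => (Multiset.mem_filter.mp hx).2) h1 h2
  have hs : Mset s = Mset (s.filter (strd A B C hr)) *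
      Mset (s.filter fun y => ¬ strd A B C hr y) := by
    rw [← Mset_add, Multiset.filter_add_not]
  have hs' : Mset s' = Mset (s'.filter (strd A B C hr)) *
      Mset (s'.filter fun y => ¬ strd A B C hr y) := by
    rw [← Mset_add, Multiset.filter_add_not]
  rw [hs, hs', ← h3]
  have he : Mset (s.filter (strd A B C hr)) * Mset (s.filter fun y => ¬ strd A B C hr y) -
      Mset (s'.filter (strd A B C hr)) * Mset (s.filter fun y => ¬ strd A B C hr y)
      = (Mset (s.filter (strd A B C hr)) - Mset (s'.filter (strd A B C hr))) *
        Mset (s.filter fun y => ¬ strd A B C hr y) := by ring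
  rw [he]
  exact Ideal.mul_mem_right _ _ hkey

lemma phi_C (c : ℝ) : phi A B C hr (MvPolynomial.C c) = MvPolynomial.C c := by
  unfold phi
  rw [aeval_C, algebraMap_eq]

lemma ker_sub (hAB : Disjoint A B) (J : Ideal (MvPolynomial ((v : Fin m) → Fin (r v)) ℝ))
    (hswap : ∀ z z₁ z₂ : (v : Fin m) → Fin (r v), strd A B C hr z → strd A B C hr z₁ →
      strd A B C hr z₂ → pA B hr z₁ = pA B hr z → pB A hr z₂ = pB A hr z →
      X z₁ * X z₂ - X (comb B z₁ z₂) * X (comb B z₂ z₁) ∈ J)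
    (hJ : ∀ g ∈ J, phi A B C hr g = 0) :
    ∀ (n : ℕ) (f : MvPolynomial ((v : Fin m) → Fin (r v)) ℝ),
      f.support.card ≤ n → phi A B C hr f = 0 → f ∈ J := by
  intro n
  induction n with
  | zero =>
    intro f hcard hker
    have h0 : f = 0 := by
      have : f.support = ∅ := Finset.card_eq_zero.mp (Nat.le_zero.mp hcard)
      exact support_eq_empty.mp this
    rw [h0]; exact J.zero_mem
  | succ n ih =>
    intro f hcard hker
    by_cases h0 : f = 0
    · rw [h0]; exact J.zero_mem
    obtain ⟨d, hd⟩ : f.support.Nonempty :=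
      Finset.nonempty_of_ne_empty (fun h => h0 (support_eq_empty.mp h))
    classical
    set E := Multiset.toFinsupp (PhiM A B C hr (Finsupp.toMultiset d)) with hE
    set cls := f.support.filter
      (fun d' => Multiset.toFinsupp (PhiM A B C hr (Finsupp.toMultiset d')) = E) with hcls
    have hdc : d ∈ cls := Finset.mem_filter.mpr ⟨hd, rfl⟩
    have hclssub : cls ⊆ f.support := Finset.filter_subset _ _
    -- the expansion of phi f
    have hphif : phi A B C hr f = ∑ d' ∈ f.support,
        MvPolynomial.C (coeff d' f) * Mset (PhiM A B C hr (Finsupp.toMultiset d')) := by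
      conv_lhs => rw [MvPolynomial.as_sum f]
      rw [map_sum]
      refine Finset.sum_congr rfl fun d' _ => ?_
      rw [monomial_eq_Mset, map_mul, phi_Mset, phi_C]
    -- sum of coefficients over the class vanishes
    have hsum : ∑ d' ∈ cls, coeff d' f = 0 := by
      have hc0 : coeff E (phi A B C hr f) = 0 := by rw [hker, coeff_zero]
      rw [hphif, MvPolynomial.coeff_sum] at hc0
      have hterm : ∀ d' ∈ f.support,
          coeff E (MvPolynomial.C (coeff d' f) * Mset (PhiM A B C hr (Finsupp.toMultiset d'))) =
          (if Multiset.toFinsupp (PhiM A B C hr (Finsupp.toMultiset d')) = E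
            then coeff d' f else 0) := by
        intro d' _
        unfold Mset
        rw [MvPolynomial.coeff_C_mul, coeff_monomial, mul_ite, mul_one, mul_zero]
      rw [Finset.sum_congr rfl hterm, ← Finset.sum_filter] at hc0
      exact hc0
    -- the correction polynomial
    set w := ∑ d' ∈ cls, (monomial d' (coeff d' f)) with hw
    have hwJ : w ∈ J := by
      have hcc : (∑ d' ∈ cls, MvPolynomial.C (coeff d' f) : MvPolynomial ((v : Fin m) → Fin (r v)) ℝ)
          = 0 := by rw [← map_sum, hsum, map_zero]
      have hw2 : w = ∑ d' ∈ cls, MvPolynomial.C (coeff d' f) *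
          (Mset (Finsupp.toMultiset d') - Mset (Finsupp.toMultiset d)) := by
        rw [hw]
        calc ∑ d' ∈ cls, (monomial d' (coeff d' f))
            = ∑ d' ∈ cls, MvPolynomial.C (coeff d' f) * Mset (Finsupp.toMultiset d') :=
              Finset.sum_congr rfl (fun d' _ => monomial_eq_Mset _ _)
          _ = ∑ d' ∈ cls, (MvPolynomial.C (coeff d' f) *
                (Mset (Finsupp.toMultiset d') - Mset (Finsupp.toMultiset d)) +
                MvPolynomial.C (coeff d' f) * Mset (Finsupp.toMultiset d)) :=
              Finset.sum_congr rfl (fun d' _ => by ring)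
          _ = (∑ d' ∈ cls, MvPolynomial.C (coeff d' f) *
                (Mset (Finsupp.toMultiset d') - Mset (Finsupp.toMultiset d))) +
              (∑ d' ∈ cls, MvPolynomial.C (coeff d' f)) * Mset (Finsupp.toMultiset d) := by
              rw [Finset.sum_add_distrib, Finset.sum_mul]
          _ = ∑ d' ∈ cls, MvPolynomial.C (coeff d' f) *
                (Mset (Finsupp.toMultiset d') - Mset (Finsupp.toMultiset d)) := by
              rw [hcc, zero_mul, add_zero]
      rw [hw2]
      refine Ideal.sum_mem _ (fun d' hd' => Ideal.mul_mem_left _ _ ?_)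
      refine Mset_diff_mem hAB J hswap ?_
      exact Multiset.toFinsupp.injective (Finset.mem_filter.mp hd').2
    -- pass to f - w
    have hcoeffw : ∀ e, coeff e w = if e ∈ cls then coeff e f else 0 := by
      intro e
      rw [hw]
      rw [show coeff e (∑ d' ∈ cls, (monomial d' (coeff d' f)))
          = ∑ d' ∈ cls, coeff e (monomial d' (coeff d' f)) from MvPolynomial.coeff_sum _ _ _]
      rw [Finset.sum_congr rfl (fun d' _ => coeff_monomial e d' (coeff d' f))]
      exact Finset.sum_ite_eq' cls e (fun d' => coeff d' f)
    have hgsupp : (f - w).support ⊆ f.support \ cls := by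
      intro e he
      rw [MvPolynomial.mem_support_iff] at he
      rw [MvPolynomial.coeff_sub, hcoeffw e] at he
      by_cases hec : e ∈ cls
      · rw [if_pos hec, sub_self] at he; exact absurd rfl he
      · rw [if_neg hec, sub_zero] at he
        exact Finset.mem_sdiff.mpr ⟨MvPolynomial.mem_support_iff.mpr he, hec⟩
    have hgcard : (f - w).support.card ≤ n := by
      have h1 := Finset.card_le_card hgsupp
      rw [Finset.card_sdiff_of_subset hclssub] at h1
      have h2 : 1 ≤ cls.card := Finset.card_pos.mpr ⟨d, hdc⟩
      omega
    have hgker : phi A B C hr (f - w) = 0 := by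
      rw [map_sub, hker, hJ w hwJ, sub_zero]
    have hg := ih (f - w) hgcard hgker
    have : f = (f - w) + w := by ring
    rw [this]
    exact J.add_mem hg hwJ

lemma phi_X_strd {y : (v : Fin m) → Fin (r v)} (h : strd A B C hr y) :
    phi A B C hr (X y) = X (Sum.inl (pA B hr y)) * X (Sum.inr (pB A hr y)) := by
  unfold phi
  rw [aeval_X]
  unfold phiF
  rw [if_pos h]

lemma pA_star_mix (u v v' w : (k : Fin m) → Fin (r k)) :
    pA B hr (star A B C hr (mix A B u v w)) = pA B hr (star A B C hr (mix A B u v' w)) := by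
  funext k
  unfold pA star mix
  by_cases hkB : k ∈ B <;> by_cases hkU : k ∈ A ∪ B ∪ C <;> by_cases hkA : k ∈ A <;>
    simp only [hkB, hkU, hkA, if_true, if_false, ite_true, ite_false]

lemma pB_star_mix (u u' v w : (k : Fin m) → Fin (r k)) :
    pB A hr (star A B C hr (mix A B u v w)) = pB A hr (star A B C hr (mix A B u' v w)) := by
  funext k
  unfold pB star mix
  by_cases hkB : k ∈ B <;> by_cases hkU : k ∈ A ∪ B ∪ C <;> by_cases hkA : k ∈ A <;>
    simp only [hkB, hkU, hkA, if_true, if_false, ite_true, ite_false]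

section starmix
variable {z z₁ z₂ : (v : Fin m) → Fin (r v)}

lemma star_mix_diag (hz₁ : strd A B C hr z₁)
    (ha : pA B hr z₁ = pA B hr z) :
    star A B C hr (mix A B z₁ z₁ z) = z₁ := by
  funext k
  unfold star mix
  by_cases hkU : k ∈ A ∪ B ∪ C
  · rw [if_pos hkU]
    by_cases hkA : k ∈ A
    · rw [if_pos hkA]
    · rw [if_neg hkA]
      by_cases hkB : k ∈ B
      · rw [if_pos hkB]
      · rw [if_neg hkB]
        have hak := congrFun ha k
        unfold pA at hak
        rw [if_neg hkB, if_neg hkB] at hak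
        exact hak.symm
  · rw [if_neg hkU, hz₁ k hkU]

lemma star_mix_off (hAB : Disjoint A B)
    (hz₁ : strd A B C hr z₁) (hz₂ : strd A B C hr z₂)
    (ha : pA B hr z₁ = pA B hr z) :
    star A B C hr (mix A B z₁ z₂ z) = comb B z₁ z₂ := by
  funext k
  unfold star mix comb
  by_cases hkU : k ∈ A ∪ B ∪ C
  · rw [if_pos hkU]
    by_cases hkA : k ∈ A
    · have hkB : k ∉ B := Finset.disjoint_left.mp hAB hkA
      rw [if_pos hkA, if_neg hkB]
    · rw [if_neg hkA]
      by_cases hkB : k ∈ B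
      · rw [if_pos hkB, if_pos hkB]
      · rw [if_neg hkB, if_neg hkB]
        have hak := congrFun ha k
        unfold pA at hak
        rw [if_neg hkB, if_neg hkB] at hak
        exact hak.symm
  · rw [if_neg hkU]
    by_cases hkB : k ∈ B
    · rw [if_pos hkB, hz₂ k hkU]
    · rw [if_neg hkB, hz₁ k hkU]

lemma star_mix_diag' (hz₂ : strd A B C hr z₂)
    (hb : pB A hr z₂ = pB A hr z) :
    star A B C hr (mix A B z₂ z₂ z) = z₂ := by
  funext k
  unfold star mix
  by_cases hkU : k ∈ A ∪ B ∪ C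
  · rw [if_pos hkU]
    by_cases hkA : k ∈ A
    · rw [if_pos hkA]
    · rw [if_neg hkA]
      by_cases hkB : k ∈ B
      · rw [if_pos hkB]
      · rw [if_neg hkB]
        have hbk := congrFun hb k
        unfold pB at hbk
        rw [if_neg hkA, if_neg hkA] at hbk
        exact hbk.symm
  · rw [if_neg hkU, hz₂ k hkU]

lemma star_mix_off' (hAB : Disjoint A B)
    (hz₁ : strd A B C hr z₁) (hz₂ : strd A B C hr z₂)
    (ha : pA B hr z₁ = pA B hr z) (hb : pB A hr z₂ = pB A hr z) :
    star A B C hr (mix A B z₂ z₁ z) = comb B z₂ z₁ := by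
  funext k
  unfold star mix comb
  by_cases hkU : k ∈ A ∪ B ∪ C
  · rw [if_pos hkU]
    by_cases hkA : k ∈ A
    · have hkB : k ∉ B := Finset.disjoint_left.mp hAB hkA
      rw [if_pos hkA, if_neg hkB]
    · rw [if_neg hkA]
      by_cases hkB : k ∈ B
      · rw [if_pos hkB, if_pos hkB]
      · rw [if_neg hkB, if_neg hkB]
        have hbk := congrFun hb k
        unfold pB at hbk
        rw [if_neg hkA, if_neg hkA] at hbk
        exact hbk.symm
  · rw [if_neg hkU]
    by_cases hkB : k ∈ B
    · rw [if_pos hkB, hz₁ k hkU]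
    · rw [if_neg hkB, hz₂ k hkU]

end starmix

end key
end CIaux

open CIaux

/-- The conditional independence ideal `I_{A ⟂ B | C}`, generated by
the 2×2 minors of the formal marginal table over `A ∪ B ∪ C`, is prime. -/
theorem conditionalIndependenceIdeal_isPrime (m : ℕ) (hm : 1 ≤ m) (r : Fin m → ℕ)
    (hr : ∀ v, 1 ≤ r v) (A B C : Finset (Fin m))
    (hAB : Disjoint A B) (hAC : Disjoint A C) (hBC : Disjoint B C)
    (hA : A.Nonempty) (hB : B.Nonempty) :
    (Ideal.span { f : MvPolynomial ((v : Fin m) → Fin (r v)) ℝ |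
        ∃ u v w : (k : Fin m) → Fin (r k),
          f = margin A B C (mix A B u u w) * margin A B C (mix A B v v w)
            - margin A B C (mix A B u v w) * margin A B C (mix A B v u w) }).IsPrime := by
  classical
  set S : Set (MvPolynomial ((v : Fin m) → Fin (r v)) ℝ) :=
    { f | ∃ u v w : (k : Fin m) → Fin (r k),
          f = margin A B C (mix A B u u w) * margin A B C (mix A B v v w)
            - margin A B C (mix A B u v w) * margin A B C (mix A B v u w) } with hSdef
  set I : Ideal (MvPolynomial ((v : Fin m) → Fin (r v)) ℝ) := Ideal.span S with hI
  set crh : MvPolynomial ((v : Fin m) → Fin (r v)) ℝ →+*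
      MvPolynomial ((v : Fin m) → Fin (r v)) ℝ :=
    ((chg A B C hr).toAlgHom : _ →ₐ[ℝ] _).toRingHom with hcrh
  set prh := (phi A B C hr).toRingHom with hprh
  set ψ := prh.comp crh with hpsi
  have hSle : I ≤ RingHom.ker ψ := by
    rw [hI, Ideal.span_le]
    rintro g ⟨u, v, w, rfl⟩
    simp only [SetLike.mem_coe, RingHom.mem_ker]
    have hexp : chg A B C hr (margin A B C (mix A B u u w) * margin A B C (mix A B v v w)
            - margin A B C (mix A B u v w) * margin A B C (mix A B v u w))
        = X (star A B C hr (mix A B u u w)) * X (star A B C hr (mix A B v v w))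
          - X (star A B C hr (mix A B u v w)) * X (star A B C hr (mix A B v u w)) := by
      rw [map_sub, map_mul, map_mul, chg_margin, chg_margin, chg_margin, chg_margin]
    show phi A B C hr (chg A B C hr _) = 0
    rw [hexp, map_sub, map_mul, map_mul,
      phi_X_strd (strd_star (mix A B u u w)), phi_X_strd (strd_star (mix A B v v w)),
      phi_X_strd (strd_star (mix A B u v w)), phi_X_strd (strd_star (mix A B v u w)),
      show pA B hr (star A B C hr (mix A B u v w)) = pA B hr (star A B C hr (mix A B u u w))
        from pA_star_mix u v u w,
      show pA B hr (star A B C hr (mix A B v u w)) = pA B hr (star A B C hr (mix A B v v w))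
        from pA_star_mix v u v w,
      show pB A hr (star A B C hr (mix A B u v w)) = pB A hr (star A B C hr (mix A B v v w))
        from pB_star_mix u v v w,
      show pB A hr (star A B C hr (mix A B v u w)) = pB A hr (star A B C hr (mix A B u u w))
        from pB_star_mix v u u w]
    ring
  set J := Ideal.map crh I with hJdef
  have hswap : ∀ z z₁ z₂ : (v : Fin m) → Fin (r v), strd A B C hr z → strd A B C hr z₁ →
      strd A B C hr z₂ → pA B hr z₁ = pA B hr z → pB A hr z₂ = pB A hr z →
      X z₁ * X z₂ - X (comb B z₁ z₂) * X (comb B z₂ z₁) ∈ J := by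
    intro z z₁ z₂ hz hz₁ hz₂ ha hb
    have hgenS : (margin A B C (mix A B z₁ z₁ z) * margin A B C (mix A B z₂ z₂ z)
        - margin A B C (mix A B z₁ z₂ z) * margin A B C (mix A B z₂ z₁ z)) ∈ I :=
      Ideal.subset_span ⟨z₁, z₂, z, rfl⟩
    have hmem := Ideal.mem_map_of_mem crh hgenS
    have hcomp : crh (margin A B C (mix A B z₁ z₁ z) * margin A B C (mix A B z₂ z₂ z)
        - margin A B C (mix A B z₁ z₂ z) * margin A B C (mix A B z₂ z₁ z))
        = X z₁ * X z₂ - X (comb B z₁ z₂) * X (comb B z₂ z₁) := by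
      show chg A B C hr _ = _
      rw [map_sub, map_mul, map_mul, chg_margin, chg_margin, chg_margin, chg_margin,
        star_mix_diag hz₁ ha, star_mix_diag' hz₂ hb, star_mix_off hAB hz₁ hz₂ ha,
        star_mix_off' hAB hz₁ hz₂ ha hb]
    rwa [hcomp] at hmem
  have hJle : ∀ g ∈ J, phi A B C hr g = 0 := by
    have hle : J ≤ RingHom.ker prh := by
      rw [hJdef, Ideal.map_le_iff_le_comap]
      intro i hi
      exact hSle hi
    exact fun g hg => RingHom.mem_ker.mp (hle hg)
  have hker_eq : I = RingHom.ker ψ := by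
    refine le_antisymm hSle ?_
    intro f hf
    have hphif : phi A B C hr (chg A B C hr f) = 0 := RingHom.mem_ker.mp hf
    have hmem := ker_sub hAB J hswap hJle (chg A B C hr f).support.card
      (chg A B C hr f) le_rfl hphif
    have hcm : Ideal.comap crh (Ideal.map crh I) = I :=
      Ideal.comap_map_of_bijective crh (chg A B C hr).bijective
    rw [← hcm]
    exact hmem
  rw [hker_eq]
  exact RingHom.ker_isPrime ψ
end

section
/- Let $\Bbbk$ be a field, let $h, r \geq 1$, and let $A \in \mathbb{Z}^{h \times r}$ be an integer matrix. In the polynomial ring $\Bbbk[p_1, \ldots, p_r]$, the toric ideal $I_A := \langle p^{u_+} - p^{u_-} : u \in \mathbb{Z}^r, Au = 0 \rangle$ is a prime ideal, where $u = u_+ - u_-$ is the decomposition of $u$ into its componentwise positive part $u_+ \in \mathbb{N}^r$ and negative part $u_- \in \mathbb{N}^r$, and $p^v$ denotes the monomial $p_1^{v_1} \cdots p_r^{v_r}$. -/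
/-!
Give `pᵢ` the weight `A eᵢ ∈ ℤʰ`. Then `I_A` is the kernel of the monomial map
`k[p] → k[ℤʰ]`, `pᵢ ↦ t^{A eᵢ}`, and the group algebra of the torsion-free group `ℤʰ` is a
domain, so `I_A` is prime.

The kernel of a monomial map is spanned by the binomials `p^a - p^b` with `a` and `b` of equal
weight: fixing one exponent of each weight, every polynomial is congruent modulo these binomials
to the lift of its image. Such a binomial is `p^(a ⊓ b) (p^(a - b) - p^(b - a))`, a multiple of
the generator of `I_A` for `u = a - b`.
-/

open MvPolynomial Matrix

section
variable {R σ M : Type*} [CommRing R] [AddCommMonoid M]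

variable (R) in
noncomputable def monomialMap (w : σ → M) : MvPolynomial σ R →ₐ[R] AddMonoidAlgebra R M :=
  AddMonoidAlgebra.mapDomainAlgHom R R (Finsupp.weight w)

theorem monomialMap_monomial (w : σ → M) (a : σ →₀ ℕ) (c : R) :
    monomialMap R w (monomial a c) = AddMonoidAlgebra.single (Finsupp.weight w a) c :=
  AddMonoidAlgebra.mapDomain_single

variable (R) in
noncomputable def binomialIdeal (w : σ → M) : Ideal (MvPolynomial σ R) :=
  Ideal.span {f | ∃ a b, Finsupp.weight w a = Finsupp.weight w b ∧ f = monomial a 1 - monomial b 1}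

theorem monomial_sub_monomial_mem_binomialIdeal {w : σ → M} {a b : σ →₀ ℕ}
    (hab : Finsupp.weight w a = Finsupp.weight w b) (c : R) :
    monomial a c - monomial b c ∈ binomialIdeal R w := by
  have hbin : monomial a (1 : R) - monomial b 1 ∈ binomialIdeal R w :=
    Ideal.subset_span ⟨a, b, hab, rfl⟩
  simpa [mul_sub, C_mul_monomial] using Ideal.mul_mem_left _ (C c) hbin

theorem sub_mapDomain_monomialMap_mem_binomialIdeal (w : σ → M) (f : MvPolynomial σ R) :
    f - AddMonoidAlgebra.mapDomainLinearMap R R (Function.invFun (Finsupp.weight w))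
      (monomialMap R w f) ∈ binomialIdeal R w := by
  induction f using MvPolynomial.induction_on' with
  | monomial a c =>
    rw [monomialMap_monomial, AddMonoidAlgebra.mapDomainLinearMap_single]
    exact monomial_sub_monomial_mem_binomialIdeal (Function.invFun_eq ⟨a, rfl⟩).symm c
  | add f g hf hg =>
    rw [map_add, map_add, add_sub_add_comm]
    exact Ideal.add_mem _ hf hg

theorem ker_monomialMap (w : σ → M) : RingHom.ker (monomialMap R w) = binomialIdeal R w := by
  refine le_antisymm (fun f hf => ?_) (Ideal.span_le.mpr ?_)
  · simpa [(RingHom.mem_ker).mp hf] using sub_mapDomain_monomialMap_mem_binomialIdeal w f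
  · rintro _ ⟨a, b, hab, rfl⟩
    simp [monomialMap_monomial, hab]

end

section
variable {R : Type*} [CommRing R] {σ : Type*}

theorem monomial_sub_monomial_eq_monomial_inf_mul (a b : σ →₀ ℕ) :
    (monomial a 1 - monomial b 1 : MvPolynomial σ R) =
      monomial (a ⊓ b) 1 * (monomial (a - b) 1 - monomial (b - a) 1) := by
  have ha : a ⊓ b + (a - b) = a := by
    ext i
    simp only [Finsupp.add_apply, Finsupp.inf_apply, Finsupp.tsub_apply]
    omega
  have hb : a ⊓ b + (b - a) = b := by
    ext i
    simp only [Finsupp.add_apply, Finsupp.inf_apply, Finsupp.tsub_apply]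
    omega
  rw [mul_sub, monomial_mul, monomial_mul, ha, hb, mul_one]

theorem prod_univ_X_pow_eq_monomial [Fintype σ] (n : σ → ℕ) :
    ∏ i, (X i : MvPolynomial σ R) ^ n i = monomial (Finsupp.equivFunOnFinite.symm n) 1 := by
  rw [monomial_eq, Finsupp.prod_fintype _ _ (fun _ => pow_zero _)]
  simp

variable {m : Type*} [Fintype σ]

theorem weight_transpose_eq_mulVec (A : Matrix m σ ℤ) (a : σ →₀ ℕ) :
    Finsupp.weight (fun i => Aᵀ i) a = A *ᵥ fun i => (a i : ℤ) := by
  ext j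
  simp [Finsupp.weight_eq_sum, Matrix.mulVec, dotProduct, mul_comm]

theorem span_toricBinomials_eq_binomialIdeal (A : Matrix m σ ℤ) :
    Ideal.span {f : MvPolynomial σ R | ∃ u : σ → ℤ, A *ᵥ u = 0 ∧
      f = (∏ i, X i ^ (u i).toNat) - ∏ i, X i ^ (-u i).toNat} =
      binomialIdeal R (fun i => Aᵀ i) := by
  refine le_antisymm (Ideal.span_le.mpr ?_) (Ideal.span_le.mpr ?_)
  · rintro _ ⟨u, hu, rfl⟩
    rw [prod_univ_X_pow_eq_monomial, prod_univ_X_pow_eq_monomial]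
    refine Ideal.subset_span ⟨_, _, ?_, rfl⟩
    have hsplit : (fun i => ((u i).toNat : ℤ)) = (fun i => ((-u i).toNat : ℤ)) + u := by
      funext i
      simp only [Pi.add_apply]
      omega
    simp only [weight_transpose_eq_mulVec, Finsupp.coe_equivFunOnFinite_symm]
    rw [hsplit, mulVec_add, hu, add_zero]
  · rintro _ ⟨a, b, hab, rfl⟩
    rw [monomial_sub_monomial_eq_monomial_inf_mul]
    refine Ideal.mul_mem_left _ _
      (Ideal.subset_span ⟨(fun i => (a i : ℤ)) - fun i => (b i : ℤ), ?_, ?_⟩)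
    · rw [weight_transpose_eq_mulVec, weight_transpose_eq_mulVec] at hab
      rw [mulVec_sub, hab, sub_self]
    · rw [prod_univ_X_pow_eq_monomial, prod_univ_X_pow_eq_monomial]
      congr <;> ext i <;> simp

end

theorem toricIdeal_isPrime_general (k : Type*) [Field k] (h r : ℕ)
    (A : Matrix (Fin h) (Fin r) ℤ) :
    (Ideal.span { f : MvPolynomial (Fin r) k |
        ∃ u : Fin r → ℤ, A.mulVec u = 0 ∧
          f = (∏ i, X i ^ (u i).toNat) - ∏ i, X i ^ (-u i).toNat }).IsPrime := by
  rw [span_toricBinomials_eq_binomialIdeal, ← ker_monomialMap]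
  exact RingHom.ker_isPrime _

/-- For an integer matrix `A ∈ ℤ^{h×r}`, the toric ideal
`I_A = ⟨ p^{u₊} - p^{u₋} : u ∈ kerℤ A ⟩` is prime over any field `k`. -/
theorem toricIdeal_isPrime (k : Type*) [Field k] (h r : ℕ) (hh : 1 ≤ h) (hr : 1 ≤ r)
    (A : Matrix (Fin h) (Fin r) ℤ) :
    (Ideal.span { f : MvPolynomial (Fin r) k |
        ∃ u : Fin r → ℤ, A.mulVec u = 0 ∧
          f = (∏ i, X i ^ (u i).toNat) - ∏ i, X i ^ (-u i).toNat }).IsPrime :=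
  toricIdeal_isPrime_general k h r A
end

section
/- Let $p : \{1,2\}^3 \to \mathbb{R}$ be a pmf (nonnegative values summing to 1), the joint distribution of binary random variables $X, Y, Z$ indexed so that $p(i,j,k) = P(X=i, Y=j, Z=k)$. Suppose $p$ satisfies $X \perp\!\!\!\perp Y$, i.e. $(\sum_k p(i,j,k))(\sum_k p(i',j',k)) = (\sum_k p(i,j',k))(\sum_k p(i',j,k))$ for all $i,i',j,j'$, and $X \perp\!\!\!\perp Y \mid Z$, i.e. $p(i,j,k)p(i',j',k) = p(i,j',k)p(i',j,k)$ for all $i,i',j,j',k$. Then either $p$ satisfies $X \perp\!\!\!\perp (Y,Z)$, i.e. $p(i,j,k)p(i',j',k') = p(i,j',k')p(i',j,k)$ for all indices, or $p$ satisfies $(X,Z) \perp\!\!\!\perp Y$, i.e. $p(i,j,k)p(i',j',k') = p(i,j',k)p(i',j,k')$ for all indices. -/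
/-- For binary random variables `X, Y, Z` with joint pmf `p`, if
`X ⟂ Y` and `X ⟂ Y | Z`, then `X ⟂ (Y,Z)` or `(X,Z) ⟂ Y`. -/
theorem binary_ci_implication (p : Fin 2 → Fin 2 → Fin 2 → ℝ)
    (hnonneg : ∀ i j k, 0 ≤ p i j k)
    (hsum : ∑ i, ∑ j, ∑ k, p i j k = 1)
    (hXY : ∀ i i' j j' : Fin 2,
      (∑ k, p i j k) * (∑ k, p i' j' k) = (∑ k, p i j' k) * (∑ k, p i' j k))
    (hXY_Z : ∀ (i i' j j' k : Fin 2),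
      p i j k * p i' j' k = p i j' k * p i' j k) :
    (∀ i i' j j' k k' : Fin 2, p i j k * p i' j' k' = p i j' k' * p i' j k) ∨
    (∀ i i' j j' k k' : Fin 2, p i j k * p i' j' k' = p i j' k * p i' j k') := by
  -- key factorization: p i j k * S k = A i k * B j k
  have key : ∀ i j k : Fin 2,
      p i j k * (p 0 0 k + p 0 1 k + p 1 0 k + p 1 1 k)
        = (p i 0 k + p i 1 k) * (p 0 j k + p 1 j k) := by
    intro i j k
    linear_combination hXY_Z i 0 j 0 k + hXY_Z i 0 j 1 k + hXY_Z i 1 j 0 k + hXY_Z i 1 j 1 k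
  have hC' : p 0 0 0 * p 1 1 1 + p 0 0 1 * p 1 1 0
      = p 0 1 0 * p 1 0 1 + p 0 1 1 * p 1 0 0 := by
    have h := hXY 0 1 0 1
    simp only [Fin.sum_univ_two] at h
    linear_combination h - hXY_Z 0 1 0 1 0 - hXY_Z 0 1 0 1 1
  have hSnn : ∀ k : Fin 2, ∀ x y : Fin 2,
      p 0 0 k + p 0 1 k + p 1 0 k + p 1 1 k = 0 → p x y k = 0 := by
    intro k x y h
    fin_cases x <;> fin_cases y <;>
      simp only [Fin.mk_zero, Fin.mk_one] <;> linarith [hnonneg 0 0 k, hnonneg 0 1 k, hnonneg 1 0 k, hnonneg 1 1 k]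
  have hDaDb :
      ((p 0 0 0 + p 0 1 0) * (p 1 0 1 + p 1 1 1) - (p 0 0 1 + p 0 1 1) * (p 1 0 0 + p 1 1 0))
      * ((p 0 0 0 + p 1 0 0) * (p 0 1 1 + p 1 1 1) - (p 0 0 1 + p 1 0 1) * (p 0 1 0 + p 1 1 0))
      = 0 := by
    linear_combination
      (p 0 0 0 + p 0 1 0 + p 1 0 0 + p 1 1 0) * (p 0 0 1 + p 0 1 1 + p 1 0 1 + p 1 1 1) * hC'
      - p 1 1 1 * (p 0 0 1 + p 0 1 1 + p 1 0 1 + p 1 1 1) * key 0 0 0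
      - (p 0 0 0 + p 0 1 0) * (p 0 0 0 + p 1 0 0) * key 1 1 1
      - p 1 1 0 * (p 0 0 0 + p 0 1 0 + p 1 0 0 + p 1 1 0) * key 0 0 1
      - (p 0 0 1 + p 0 1 1) * (p 0 0 1 + p 1 0 1) * key 1 1 0
      + p 1 0 1 * (p 0 0 1 + p 0 1 1 + p 1 0 1 + p 1 1 1) * key 0 1 0
      + (p 0 0 0 + p 0 1 0) * (p 0 1 0 + p 1 1 0) * key 1 0 1
      + p 1 0 0 * (p 0 0 0 + p 0 1 0 + p 1 0 0 + p 1 1 0) * key 0 1 1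
      + (p 0 0 1 + p 0 1 1) * (p 0 1 1 + p 1 1 1) * key 1 0 0
  rcases mul_eq_zero.mp hDaDb with hDa | hDb
  · -- A has rank one
    have hA : ∀ i i' k k' : Fin 2,
        (p i 0 k + p i 1 k) * (p i' 0 k' + p i' 1 k')
          = (p i 0 k' + p i 1 k') * (p i' 0 k + p i' 1 k) := by
      intro i i' k k'
      fin_cases i <;> fin_cases i' <;> fin_cases k <;> fin_cases k' <;>
        simp only [Fin.mk_zero, Fin.mk_one] <;> first | ring1 | linear_combination hDa | linear_combination -1 * hDa
    left
    intro i i' j j' k k'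
    by_cases h0 : p 0 0 k + p 0 1 k + p 1 0 k + p 1 1 k = 0
    · rw [hSnn k i j h0, hSnn k i' j h0]; ring
    by_cases h1 : p 0 0 k' + p 0 1 k' + p 1 0 k' + p 1 1 k' = 0
    · rw [hSnn k' i' j' h1, hSnn k' i j' h1]; ring
    · have hmul : (p i j k * p i' j' k' - p i j' k' * p i' j k)
          * ((p 0 0 k + p 0 1 k + p 1 0 k + p 1 1 k)
            * (p 0 0 k' + p 0 1 k' + p 1 0 k' + p 1 1 k')) = 0 := by
        linear_combination
          (p i' j' k' * (p 0 0 k' + p 0 1 k' + p 1 0 k' + p 1 1 k')) * key i j k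
          + ((p i 0 k + p i 1 k) * (p 0 j k + p 1 j k)) * key i' j' k'
          - (p i' j k * (p 0 0 k + p 0 1 k + p 1 0 k + p 1 1 k)) * key i j' k'
          - ((p i 0 k' + p i 1 k') * (p 0 j' k' + p 1 j' k')) * key i' j k
          + ((p 0 j k + p 1 j k) * (p 0 j' k' + p 1 j' k')) * hA i i' k k'
      rcases mul_eq_zero.mp hmul with h | h
      · linarith
      · rcases mul_eq_zero.mp h with h | h <;> exact absurd h (by assumption)
  · -- B has rank one
    have hB : ∀ j j' k k' : Fin 2,
        (p 0 j k + p 1 j k) * (p 0 j' k' + p 1 j' k')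
          = (p 0 j k' + p 1 j k') * (p 0 j' k + p 1 j' k) := by
      intro j j' k k'
      fin_cases j <;> fin_cases j' <;> fin_cases k <;> fin_cases k' <;>
        simp only [Fin.mk_zero, Fin.mk_one] <;> first | ring1 | linear_combination hDb | linear_combination -1 * hDb
    right
    intro i i' j j' k k'
    by_cases h0 : p 0 0 k + p 0 1 k + p 1 0 k + p 1 1 k = 0
    · rw [hSnn k i j h0, hSnn k i j' h0]; ring
    by_cases h1 : p 0 0 k' + p 0 1 k' + p 1 0 k' + p 1 1 k' = 0
    · rw [hSnn k' i' j' h1, hSnn k' i' j h1]; ring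
    · have hmul : (p i j k * p i' j' k' - p i j' k * p i' j k')
          * ((p 0 0 k + p 0 1 k + p 1 0 k + p 1 1 k)
            * (p 0 0 k' + p 0 1 k' + p 1 0 k' + p 1 1 k')) = 0 := by
        linear_combination
          (p i' j' k' * (p 0 0 k' + p 0 1 k' + p 1 0 k' + p 1 1 k')) * key i j k
          + ((p i 0 k + p i 1 k) * (p 0 j k + p 1 j k)) * key i' j' k'
          - (p i' j k' * (p 0 0 k' + p 0 1 k' + p 1 0 k' + p 1 1 k')) * key i j' k
          - ((p i 0 k + p i 1 k) * (p 0 j' k + p 1 j' k)) * key i' j k'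
          + ((p i 0 k + p i 1 k) * (p i' 0 k' + p i' 1 k')) * hB j j' k k'
      rcases mul_eq_zero.mp hmul with h | h
      · linarith
      · rcases mul_eq_zero.mp h with h | h <;> exact absurd h (by assumption)
end

section
/- Work in the polynomial ring $\mathbb{R}[\sigma_{11}, \sigma_{12}, \sigma_{13}, \sigma_{22}, \sigma_{23}, \sigma_{33}]$. Then $\langle \sigma_{13}\sigma_{22} - \sigma_{12}\sigma_{23},\ \sigma_{13} \rangle = \langle \sigma_{12}, \sigma_{13} \rangle \cap \langle \sigma_{23}, \sigma_{13} \rangle$. -/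
open MvPolynomial

/-- The indeterminate `σᵢⱼ` of the polynomial ring
`ℝ[σ₁₁, σ₁₂, σ₁₃, σ₂₂, σ₂₃, σ₃₃]` (entries of a symmetric 3×3 matrix,
indexed with `i ≤ j`). -/
noncomputable def sVar (i j : Fin 3) : MvPolynomial (Fin 3 × Fin 3) ℝ :=
  X (i, j)

private noncomputable def ee (v : Fin 3 × Fin 3) : (Fin 3 × Fin 3) →₀ ℕ :=
  Finsupp.single v 1

private lemma sVar_eq (i j : Fin 3) :
    sVar i j = monomial (ee (i, j)) (1 : ℝ) := by
  rw [sVar, ee, X]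

private lemma key :
    Ideal.span {sVar 0 1 * sVar 1 2, sVar 0 2} =
      Ideal.span {sVar 0 1, sVar 0 2} ⊓ Ideal.span {sVar 1 2, sVar 0 2} := by
  have h1 : ({sVar 0 1 * sVar 1 2, sVar 0 2} : Set (MvPolynomial (Fin 3 × Fin 3) ℝ))
      = (fun s => monomial s (1 : ℝ)) '' {ee (0, 1) + ee (1, 2), ee (0, 2)} := by
    rw [Set.image_pair, sVar_eq, sVar_eq, sVar_eq, monomial_mul, one_mul]
  have h2 : ({sVar 0 1, sVar 0 2} : Set (MvPolynomial (Fin 3 × Fin 3) ℝ))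
      = (fun s => monomial s (1 : ℝ)) '' {ee (0, 1), ee (0, 2)} := by
    rw [Set.image_pair, sVar_eq, sVar_eq]
  have h3 : ({sVar 1 2, sVar 0 2} : Set (MvPolynomial (Fin 3 × Fin 3) ℝ))
      = (fun s => monomial s (1 : ℝ)) '' {ee (1, 2), ee (0, 2)} := by
    rw [Set.image_pair, sVar_eq, sVar_eq]
  ext p
  rw [h1, h2, h3, Ideal.mem_inf, mem_ideal_span_monomial_image,
    mem_ideal_span_monomial_image, mem_ideal_span_monomial_image]
  constructor
  · intro h
    constructor <;> intro m hm <;> obtain ⟨s, hs, hle⟩ := h m hm <;>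
      rcases hs with rfl | rfl
    · exact ⟨ee (0, 1), Or.inl rfl, le_trans (le_add_right le_rfl) hle⟩
    · exact ⟨ee (0, 2), Or.inr rfl, hle⟩
    · exact ⟨ee (1, 2), Or.inl rfl, le_trans (le_add_left le_rfl) hle⟩
    · exact ⟨ee (0, 2), Or.inr rfl, hle⟩
  · rintro ⟨hA, hB⟩ m hm
    obtain ⟨s1, hs1, hle1⟩ := hA m hm
    obtain ⟨s2, hs2, hle2⟩ := hB m hm
    rcases hs1 with rfl | rfl
    · rcases hs2 with rfl | rfl
      · refine ⟨ee (0, 1) + ee (1, 2), Or.inl rfl, ?_⟩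
        rw [Finsupp.le_def] at hle1 hle2 ⊢
        intro v
        rw [Finsupp.add_apply]
        rcases eq_or_ne v ((0 : Fin 3), (1 : Fin 3)) with rfl | hv1
        · have := hle1 ((0 : Fin 3), (1 : Fin 3))
          simpa [ee, Finsupp.single_apply] using this
        · rcases eq_or_ne v ((1 : Fin 3), (2 : Fin 3)) with rfl | hv2
          · have := hle2 ((1 : Fin 3), (2 : Fin 3))
            simpa [ee, Finsupp.single_apply] using this
          · simp [ee, Finsupp.single_apply, Ne.symm hv1, Ne.symm hv2]
      · exact ⟨ee (0, 2), Or.inr rfl, hle2⟩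
    · exact ⟨ee (0, 2), Or.inr rfl, hle1⟩

/-- `⟨σ₁₃σ₂₂ - σ₁₂σ₂₃, σ₁₃⟩ = ⟨σ₁₂, σ₁₃⟩ ∩ ⟨σ₂₃, σ₁₃⟩`. -/
theorem gaussian_ci_ideal_decomposition :
    Ideal.span {sVar 0 2 * sVar 1 1 - sVar 0 1 * sVar 1 2, sVar 0 2} =
      Ideal.span {sVar 0 1, sVar 0 2} ⊓ Ideal.span {sVar 1 2, sVar 0 2} := by
  rw [← key]
  apply le_antisymm <;> rw [Ideal.span_le] <;> rintro p hp <;>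
    rcases hp with rfl | rfl
  · exact Ideal.mem_span_pair.mpr ⟨-1, sVar 1 1, by ring⟩
  · exact Ideal.subset_span (Or.inr rfl)
  · exact Ideal.mem_span_pair.mpr ⟨-1, sVar 1 1, by ring⟩
  · exact Ideal.subset_span (Or.inr rfl)
end

section
/- Work in the polynomial ring $\mathbb{R}[\sigma_{11}, \sigma_{12}, \sigma_{13}, \sigma_{22}, \sigma_{23}, \sigma_{33}]$. Then $\langle \sigma_{12}\sigma_{33} - \sigma_{13}\sigma_{23},\ \sigma_{23} \rangle = \langle \sigma_{12}, \sigma_{23} \rangle \cap \langle \sigma_{33}, \sigma_{23} \rangle$. -/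
open MvPolynomial

noncomputable def killVars : MvPolynomial (Fin 3 × Fin 3) ℝ →ₐ[ℝ] MvPolynomial (Fin 3 × Fin 3) ℝ :=
  aeval (fun v => if v = ((2 : Fin 3), (2 : Fin 3)) ∨ v = ((1 : Fin 3), (2 : Fin 3)) then 0 else X v)

lemma sub_killVars_mem (p : MvPolynomial (Fin 3 × Fin 3) ℝ) :
    p - killVars p ∈ Ideal.span {sVar 2 2, sVar 1 2} := by
  induction p using MvPolynomial.induction_on with
  | C r => simp [killVars]
  | add p q hp hq =>
      have := Ideal.add_mem _ hp hq
      simpa [map_add, add_sub_add_comm] using this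
  | mul_X p v hp =>
      by_cases hv : v = ((2 : Fin 3), (2 : Fin 3)) ∨ v = ((1 : Fin 3), (2 : Fin 3))
      · have hX : (X v : MvPolynomial (Fin 3 × Fin 3) ℝ) ∈ Ideal.span {sVar 2 2, sVar 1 2} := by
          rcases hv with h | h <;> subst h <;> apply Ideal.subset_span <;> simp [sVar]
        have : killVars (p * X v) = 0 := by
          simp [killVars, hv]
        rw [this, sub_zero]
        exact Ideal.mul_mem_left _ _ hX
      · have : killVars (p * X v) = killVars p * X v := by
          simp [killVars, hv]
        rw [this]
        have : p * X v - killVars p * X v = (p - killVars p) * X v := by ring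
        rw [this]
        exact Ideal.mul_mem_right _ _ hp

lemma killVars_eq_zero (p : MvPolynomial (Fin 3 × Fin 3) ℝ)
    (hp : p ∈ Ideal.span {sVar 2 2, sVar 1 2}) : killVars p = 0 := by
  rw [Ideal.mem_span_pair] at hp
  obtain ⟨a, b, rfl⟩ := hp
  simp [killVars, sVar]

/-- `⟨σ₁₂σ₃₃ - σ₁₃σ₂₃, σ₂₃⟩ = ⟨σ₁₂, σ₂₃⟩ ⊓ ⟨σ₃₃, σ₂₃⟩`. -/
theorem gaussian_contraction_ideal_decomposition :
    Ideal.span {sVar 0 1 * sVar 2 2 - sVar 0 2 * sVar 1 2, sVar 1 2} =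
      Ideal.span {sVar 0 1, sVar 1 2} ⊓ Ideal.span {sVar 2 2, sVar 1 2} := by
  apply le_antisymm
  · rw [Ideal.span_le]
    rintro x (rfl | rfl)
    · constructor
      · rw [SetLike.mem_coe, Ideal.mem_span_pair]
        exact ⟨sVar 2 2, -(sVar 0 2), by ring⟩
      · rw [SetLike.mem_coe, Ideal.mem_span_pair]
        exact ⟨sVar 0 1, -(sVar 0 2), by ring⟩
    · constructor <;> · apply Ideal.subset_span; simp
  · rintro p ⟨h1, h2⟩
    rw [SetLike.mem_coe] at h1 h2
    rw [Ideal.mem_span_pair] at h1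
    obtain ⟨a, b, hab⟩ := h1
    have hmem : a * sVar 0 1 ∈ Ideal.span {sVar 2 2, sVar 1 2} := by
      have hX : (sVar 1 2 : MvPolynomial (Fin 3 × Fin 3) ℝ) ∈ Ideal.span {sVar 2 2, sVar 1 2} := by
        apply Ideal.subset_span; simp
      have : a * sVar 0 1 = p - b * sVar 1 2 := by rw [← hab]; ring
      rw [this]
      exact Ideal.sub_mem _ h2 (Ideal.mul_mem_left _ _ hX)
    have hka : killVars a = 0 := by
      have h0 := killVars_eq_zero _ hmem
      rw [map_mul] at h0
      have hX01 : killVars (sVar 0 1) = sVar 0 1 := by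
        simp [killVars, sVar]
      rw [hX01] at h0
      rcases mul_eq_zero.mp h0 with h | h
      · exact h
      · exact absurd h (MvPolynomial.X_ne_zero _)
    have ha : a ∈ Ideal.span {sVar 2 2, sVar 1 2} := by
      have := sub_killVars_mem a
      rwa [hka, sub_zero] at this
    rw [Ideal.mem_span_pair] at ha
    obtain ⟨c, e, hce⟩ := ha
    rw [Ideal.mem_span_pair]
    refine ⟨c, c * sVar 0 2 + e * sVar 0 1 + b, ?_⟩
    rw [← hab, ← hce]
    unfold sVar
    ring
end

section
/- Let $r_1, r_2, r_3 \geq 1$ and let $p : [r_1] \times [r_2] \times [r_3] \to \mathbb{R}$ be a pmf (nonnegative values summing to 1), the joint distribution of discrete random variables $X_1, X_2, X_3$. Then $p$ satisfies both $X_1 \perp\!\!\!\perp X_2 \mid X_3$ and $X_1 \perp\!\!\!\perp X_3 \mid X_2$ (i.e. $p(i_1,i_2,i_3)p(j_1,j_2,i_3) = p(i_1,j_2,i_3)p(j_1,i_2,i_3)$ and $p(i_1,i_2,i_3)p(j_1,i_2,j_3) = p(i_1,i_2,j_3)p(j_1,i_2,i_3)$ for all indices) if and only if there exist $s \geq 1$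 and functions $f : [r_2] \to [s]$, $g : [r_3] \to [s]$ such that: (a) $p(i_1,i_2,i_3) = 0$ whenever $f(i_2) \neq g(i_3)$, and (b) $p(i_1,i_2,i_3)p(j_1,j_2,j_3) = p(i_1,j_2,j_3)p(j_1,i_2,i_3)$ whenever $f(i_2) = f(j_2) = g(i_3) = g(j_3)$. -/
/-- probabilistic interpretation of the intersection-axiom
decomposition: a joint pmf `p` of `X₁, X₂, X₃` satisfies `X₁ ⟂ X₂ | X₃` and
`X₁ ⟂ X₃ | X₂` iff there are matching partitions of the state spaces of `X₂`
and `X₃` (encoded by `f`, `g`) such that (a) `p` vanishes off the diagonal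
blocks and (b) within blocks the `2×2` minors binding `X₁` to `(X₂,X₃)`
vanish. -/
theorem intersection_axiom_interpretation (r₁ r₂ r₃ : ℕ)
    (hr₁ : 1 ≤ r₁) (hr₂ : 1 ≤ r₂) (hr₃ : 1 ≤ r₃)
    (p : Fin r₁ → Fin r₂ → Fin r₃ → ℝ)
    (hnonneg : ∀ i₁ i₂ i₃, 0 ≤ p i₁ i₂ i₃)
    (hsum : ∑ i₁, ∑ i₂, ∑ i₃, p i₁ i₂ i₃ = 1) :
    ((∀ (i₁ j₁ : Fin r₁) (i₂ j₂ : Fin r₂) (i₃ : Fin r₃),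
        p i₁ i₂ i₃ * p j₁ j₂ i₃ = p i₁ j₂ i₃ * p j₁ i₂ i₃) ∧
     (∀ (i₁ j₁ : Fin r₁) (i₂ : Fin r₂) (i₃ j₃ : Fin r₃),
        p i₁ i₂ i₃ * p j₁ i₂ j₃ = p i₁ i₂ j₃ * p j₁ i₂ i₃)) ↔
    (∃ (s : ℕ), 1 ≤ s ∧ ∃ (f : Fin r₂ → Fin s) (g : Fin r₃ → Fin s),
      (∀ (i₁ : Fin r₁) (i₂ : Fin r₂) (i₃ : Fin r₃),
        f i₂ ≠ g i₃ → p i₁ i₂ i₃ = 0) ∧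
      (∀ (i₁ j₁ : Fin r₁) (i₂ j₂ : Fin r₂) (i₃ j₃ : Fin r₃),
        f i₂ = f j₂ → g i₃ = f j₂ → g j₃ = f j₂ →
        p i₁ i₂ i₃ * p j₁ j₂ j₃ = p i₁ j₂ j₃ * p j₁ i₂ i₃)) := by
  classical
  constructor
  · rintro ⟨h1, h2⟩
    -- marginal over X₁
    set q : Fin r₂ → Fin r₃ → ℝ := fun i₂ i₃ => ∑ i₁, p i₁ i₂ i₃ with hqdef
    have hpz : ∀ i₁ i₂ i₃, q i₂ i₃ = 0 → p i₁ i₂ i₃ = 0 := by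
      intro i₁ i₂ i₃ h
      exact (Finset.sum_eq_zero_iff_of_nonneg
        (fun i _ => hnonneg i i₂ i₃)).mp h i₁ (Finset.mem_univ _)
    have L1 : ∀ (i₁ : Fin r₁) (i₂ j₂ : Fin r₂) (i₃ : Fin r₃),
        p i₁ i₂ i₃ * q j₂ i₃ = p i₁ j₂ i₃ * q i₂ i₃ := by
      intro i₁ i₂ j₂ i₃
      simp only [hqdef, Finset.mul_sum]
      exact Finset.sum_congr rfl fun j₁ _ => h1 i₁ j₁ i₂ j₂ i₃
    have L2 : ∀ (i₁ : Fin r₁) (i₂ : Fin r₂) (i₃ j₃ : Fin r₃),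
        p i₁ i₂ i₃ * q i₂ j₃ = p i₁ i₂ j₃ * q i₂ i₃ := by
      intro i₁ i₂ i₃ j₃
      simp only [hqdef, Finset.mul_sum]
      exact Finset.sum_congr rfl fun j₁ _ => h2 i₁ j₁ i₂ i₃ j₃
    set ρ : Fin r₂ → Fin r₃ → Fin r₁ → ℝ := fun i₂ i₃ i₁ => p i₁ i₂ i₃ / q i₂ i₃ with hρdef
    have R1 : ∀ (i₁ : Fin r₁) (i₂ j₂ : Fin r₂) (i₃ : Fin r₃),
        q i₂ i₃ ≠ 0 → q j₂ i₃ ≠ 0 → ρ i₂ i₃ i₁ = ρ j₂ i₃ i₁ := by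
      intro i₁ i₂ j₂ i₃ ha hb
      simp only [hρdef]
      rw [div_eq_div_iff ha hb]
      exact L1 i₁ i₂ j₂ i₃
    have R2 : ∀ (i₁ : Fin r₁) (i₂ : Fin r₂) (i₃ j₃ : Fin r₃),
        q i₂ i₃ ≠ 0 → q i₂ j₃ ≠ 0 → ρ i₂ i₃ i₁ = ρ i₂ j₃ i₁ := by
      intro i₁ i₂ i₃ j₃ ha hb
      simp only [hρdef]
      rw [div_eq_div_iff ha hb]
      exact L2 i₁ i₂ i₃ j₃
    set R : Fin r₂ → Fin r₂ → Prop := fun a b => ∃ k, q a k ≠ 0 ∧ q b k ≠ 0 with hRdef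
    set E := Relation.EqvGen R with hEdef
    have key : ∀ a b, E a b → a = b ∨
        ((∃ k, q a k ≠ 0) ∧ (∃ k, q b k ≠ 0) ∧
         ∀ (i₃ j₃ : Fin r₃) (i₁ : Fin r₁), q a i₃ ≠ 0 → q b j₃ ≠ 0 →
           ρ a i₃ i₁ = ρ b j₃ i₁) := by
      intro a b h
      induction h with
      | rel a b hab =>
        obtain ⟨k, hak, hbk⟩ := hab
        refine Or.inr ⟨⟨k, hak⟩, ⟨k, hbk⟩, ?_⟩
        intro i₃ j₃ i₁ ha hb
        calc ρ a i₃ i₁ = ρ a k i₁ := R2 i₁ a i₃ k ha hak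
          _ = ρ b k i₁ := R1 i₁ a b k hak hbk
          _ = ρ b j₃ i₁ := R2 i₁ b k j₃ hbk hb
      | refl a => exact Or.inl rfl
      | symm a b _ ih =>
        rcases ih with h | ⟨ha, hb, hr⟩
        · exact Or.inl h.symm
        · exact Or.inr ⟨hb, ha, fun i₃ j₃ i₁ h1' h2' => (hr j₃ i₃ i₁ h2' h1').symm⟩
      | trans a b c _ _ ih1 ih2 =>
        rcases ih1 with h | ⟨ha, hb, hr1⟩
        · rw [h]; exact ih2
        rcases ih2 with h | ⟨hb', hc, hr2⟩
        · rw [← h]; exact Or.inr ⟨ha, hb, hr1⟩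
        refine Or.inr ⟨ha, hc, ?_⟩
        intro i₃ j₃ i₁ h1' h2'
        obtain ⟨k, hk⟩ := hb
        exact (hr1 i₃ k i₁ h1' hk).trans (hr2 k j₃ i₁ hk h2')
    have hEequiv : Equivalence E := Relation.EqvGen.is_equivalence R
    -- canonical representative of each class
    have hmem : ∀ a : Fin r₂, a ∈ Finset.univ.filter (fun x => E a x) := by
      intro a
      simp only [Finset.mem_filter, Finset.mem_univ, true_and]
      exact hEequiv.refl a
    set f : Fin r₂ → Fin r₂ := fun a =>
      (Finset.univ.filter (fun x => E a x)).min' ⟨a, hmem a⟩ with hfdef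
    have hfE : ∀ a, E a (f a) := by
      intro a
      have := Finset.min'_mem (Finset.univ.filter (fun x => E a x)) ⟨a, hmem a⟩
      simpa only [Finset.mem_filter, Finset.mem_univ, true_and] using this
    have hfeq : ∀ a b, E a b → f a = f b := by
      intro a b hab
      have : (Finset.univ.filter (fun x => E a x)) =
          (Finset.univ.filter (fun x => E b x)) := by
        ext x
        simp only [Finset.mem_filter, Finset.mem_univ, true_and]
        exact ⟨fun h => hEequiv.trans (hEequiv.symm hab) h,
               fun h => hEequiv.trans hab h⟩
      simp only [hfdef, this]
    have hfE' : ∀ a b, f a = f b → E a b := by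
      intro a b h
      exact hEequiv.trans (hfE a) (h ▸ hEequiv.symm (hfE b))
    refine ⟨r₂ + 1, Nat.succ_le_succ (Nat.zero_le _),
      fun a => (f a).castSucc,
      fun i₃ => if h : ∃ a, q a i₃ ≠ 0 then (f h.choose).castSucc else Fin.last r₂,
      ?_, ?_⟩
    · -- (a)
      intro i₁ i₂ i₃ hne
      by_contra hp
      have hq : q i₂ i₃ ≠ 0 := fun h => hp (hpz i₁ i₂ i₃ h)
      have hex : ∃ a, q a i₃ ≠ 0 := ⟨i₂, hq⟩
      have hch : q hex.choose i₃ ≠ 0 := hex.choose_spec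
      have hEci : E hex.choose i₂ := Relation.EqvGen.rel _ _ ⟨i₃, hch, hq⟩
      apply hne
      simp only [dif_pos hex]
      rw [hfeq _ _ hEci]
    · -- (b)
      intro i₁ j₁ i₂ j₂ i₃ j₃ h12 _ _
      have hf : f i₂ = f j₂ := Fin.castSucc_injective _ h12
      have hE : E i₂ j₂ := hfE' _ _ hf
      by_cases hq1 : q i₂ i₃ = 0
      · rw [hpz i₁ i₂ i₃ hq1, hpz j₁ i₂ i₃ hq1]; ring
      by_cases hq2 : q j₂ j₃ = 0
      · rw [hpz j₁ j₂ j₃ hq2, hpz i₁ j₂ j₃ hq2]; ring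
      rcases key i₂ j₂ hE with h | ⟨_, _, hr⟩
      · subst h; exact h2 i₁ j₁ i₂ i₃ j₃
      have hA := hr i₃ j₃ i₁ hq1 hq2
      have hB := hr i₃ j₃ j₁ hq1 hq2
      have e1 : p i₁ i₂ i₃ = ρ i₂ i₃ i₁ * q i₂ i₃ :=
        (div_mul_cancel₀ (p i₁ i₂ i₃) hq1).symm
      have e2 : p j₁ j₂ j₃ = ρ j₂ j₃ j₁ * q j₂ j₃ :=
        (div_mul_cancel₀ (p j₁ j₂ j₃) hq2).symm
      have e3 : p i₁ j₂ j₃ = ρ j₂ j₃ i₁ * q j₂ j₃ :=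
        (div_mul_cancel₀ (p i₁ j₂ j₃) hq2).symm
      have e4 : p j₁ i₂ i₃ = ρ i₂ i₃ j₁ * q i₂ i₃ :=
        (div_mul_cancel₀ (p j₁ i₂ i₃) hq1).symm
      rw [e1, e2, e3, e4, hA, hB]
      ring
  · rintro ⟨s, _, f, g, ha, hb⟩
    constructor
    · intro i₁ j₁ i₂ j₂ i₃
      by_cases hA : f i₂ = g i₃
      · by_cases hB : f j₂ = g i₃
        · exact hb i₁ j₁ i₂ j₂ i₃ i₃ (hA.trans hB.symm) hB.symm hB.symm
        · rw [ha j₁ j₂ i₃ hB, ha i₁ j₂ i₃ hB]; ring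
      · rw [ha i₁ i₂ i₃ hA, ha j₁ i₂ i₃ hA]; ring
    · intro i₁ j₁ i₂ i₃ j₃
      by_cases hA : f i₂ = g i₃
      · by_cases hB : f i₂ = g j₃
        · exact hb i₁ j₁ i₂ i₂ i₃ j₃ rfl hA.symm hB.symm
        · rw [ha j₁ i₂ j₃ hB, ha i₁ i₂ j₃ hB]; ring
      · rw [ha i₁ i₂ i₃ hA, ha j₁ i₂ i₃ hA]; ring
end

section
/- Let $\Sigma$ be a real $m \times m$ matrix and let $A, B, C \subseteq [m]$ be pairwise disjoint subsets such that the submatrix $\Sigma_{C,C}$ is invertible. Then the submatrix $\Sigma_{A \cup C,\, B \cup C}$ has rank at most $\#C$ if and only if $\det \Sigma_{\{a\} \cup C,\, \{b\} \cup C} = 0$ for all $a \in A$ and $b \in B$. -/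
open Matrix

/-!
Put `D = Σ_{C,C}` in the corner of the block matrix `[P Q; R D] = Σ_{A∪C,B∪C}`. By the Schur
determinant formula each bordered minor equals `det D · (P - Q D⁻¹ R)_{ab}`, so all of them
vanish iff the Schur complement is zero, and then `[P Q; R D] = [Q D⁻¹; 1] · [R D]` has rank at
most `#C`. Conversely, a matrix of rank at most `#C` has no invertible square submatrix of size
`#C + 1`.
-/

namespace Matrix

variable {ι κ K : Type*}

theorem fromBlocks_eq_fromRows_mul_fromCols [CommRing K] {n : Type*} [Fintype n] [DecidableEq n]
    (P : Matrix ι κ K) (Q : Matrix ι n K) (R : Matrix n κ K) (D : Matrix n n K) [Invertible D]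
    (h : P = Q * ⅟D * R) :
    fromBlocks P Q R D = fromRows (Q * ⅟D) 1 * fromCols R D := by
  rw [fromRows_mul_fromCols, h, Matrix.mul_assoc, Matrix.mul_assoc, invOf_mul_self,
    Matrix.mul_one, Matrix.one_mul, Matrix.one_mul]

theorem rank_fromBlocks_le_card_of_eq_mul_invOf_mul [CommRing K] [StrongRankCondition K]
    [Fintype κ] {n : Type*} [Fintype n] [DecidableEq n]
    (P : Matrix ι κ K) (Q : Matrix ι n K) (R : Matrix n κ K) (D : Matrix n n K) [Invertible D]
    (h : P = Q * ⅟D * R) :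
    (fromBlocks P Q R D).rank ≤ Fintype.card n := by
  rw [fromBlocks_eq_fromRows_mul_fromCols P Q R D h]
  exact (rank_mul_le_right _ _).trans (rank_le_card_height _)

theorem det_submatrix_cons_fromBlocks [CommRing K] {k : ℕ} (P : Matrix ι κ K)
    (Q : Matrix ι (Fin k) K) (R : Matrix (Fin k) κ K) (D : Matrix (Fin k) (Fin k) K)
    [Invertible D] (a : ι) (b : κ) :
    ((fromBlocks P Q R D).submatrix (Fin.cons (Sum.inl a) Sum.inr)
      (Fin.cons (Sum.inl b) Sum.inr)).det = D.det * (P - Q * ⅟D * R) a b := by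
  let e : Unit ⊕ Fin k ≃ Fin (k + 1) :=
    { toFun := Sum.elim (fun _ => 0) Fin.succ
      invFun := Fin.cases (Sum.inl ()) Sum.inr
      left_inv := by rintro (_ | j) <;> rfl
      right_inv := fun i => by cases i using Fin.cases <;> rfl }
  have hblocks : ((fromBlocks P Q R D).submatrix (Fin.cons (Sum.inl a) Sum.inr)
      (Fin.cons (Sum.inl b) Sum.inr)).submatrix e e =
      fromBlocks (P.submatrix (fun _ => a) (fun _ => b)) (Q.submatrix (fun _ => a) id)
        (R.submatrix id (fun _ => b)) D := by
    ext (_ | i) (_ | j) <;> rfl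
  rw [← det_submatrix_equiv_self e, hblocks, det_fromBlocks₂₂, det_unique (n := Unit)]
  rfl

theorem det_submatrix_eq_zero_of_rank_lt [Field K] [Fintype κ] {ι' : Type*} [Fintype ι']
    [DecidableEq ι'] (M : Matrix ι κ K) (f : ι' → ι) (g : ι' → κ)
    (h : M.rank < Fintype.card ι') :
    (M.submatrix f g).det = 0 := by
  by_contra hdet
  have hfull := rank_of_isUnit _ ((isUnit_iff_isUnit_det _).mpr (isUnit_iff_ne_zero.mpr hdet))
  exact (rank_submatrix_le M f g).not_gt (hfull ▸ h)

theorem rank_fromBlocks_le_iff_det_submatrix_cons_eq_zero [Field K] [Fintype κ] {k : ℕ}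
    (P : Matrix ι κ K) (Q : Matrix ι (Fin k) K) (R : Matrix (Fin k) κ K)
    (D : Matrix (Fin k) (Fin k) K) (hD : IsUnit D) :
    (fromBlocks P Q R D).rank ≤ k ↔ ∀ a b,
      ((fromBlocks P Q R D).submatrix (Fin.cons (Sum.inl a) Sum.inr)
        (Fin.cons (Sum.inl b) Sum.inr)).det = 0 := by
  have := hD.invertible
  refine ⟨fun h a b => det_submatrix_eq_zero_of_rank_lt _ _ _ ?_, fun h => ?_⟩
  · simpa using Nat.lt_succ_of_le h
  · have hschur : P - Q * ⅟D * R = 0 := by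
      ext a b
      have hab := h a b
      rw [det_submatrix_cons_fromBlocks] at hab
      exact (mul_eq_zero.mp hab).resolve_left (isUnit_det_of_invertible D).ne_zero
    simpa using rank_fromBlocks_le_card_of_eq_mul_invOf_mul P Q R D (sub_eq_zero.mp hschur)

end Matrix

theorem rank_le_card_iff_dets_vanish_general (m : ℕ) (S : Matrix (Fin m) (Fin m) ℝ)
    (A B C : Finset (Fin m))
    (hAC : Disjoint A C) (hBC : Disjoint B C)
    (hC : IsUnit (S.submatrix (fun i : C => (i : Fin m)) (fun j : C => (j : Fin m)))) :
    (S.submatrix (fun i : (A ∪ C : Finset (Fin m)) => (i : Fin m))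
        (fun j : (B ∪ C : Finset (Fin m)) => (j : Fin m))).rank ≤ C.card ↔
    ∀ a ∈ A, ∀ b ∈ B,
      (S.submatrix (Fin.cons a (fun j : Fin C.card => C.orderEmbOfFin rfl j))
        (Fin.cons b (fun j : Fin C.card => C.orderEmbOfFin rfl j))).det = 0 := by
  set c : Fin C.card ≃ C := (C.orderIsoOfFin rfl).toEquiv
  set g : Fin C.card → Fin m := fun j => C.orderEmbOfFin rfl j
  set eA := (Equiv.sumCongr (Equiv.refl A) c).trans (Equiv.Finset.union A C hAC)
  set eB := (Equiv.sumCongr (Equiv.refl B) c).trans (Equiv.Finset.union B C hBC)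
  set M := fromBlocks (S.submatrix Subtype.val Subtype.val) (S.submatrix Subtype.val g)
    (S.submatrix g Subtype.val) (S.submatrix g g) with hM
  have hD : IsUnit (S.submatrix g g) := (isUnit_submatrix_equiv c c).mpr hC
  have hblocks : (S.submatrix (fun i : (A ∪ C : Finset (Fin m)) => (i : Fin m))
      (fun j : (B ∪ C : Finset (Fin m)) => (j : Fin m))).submatrix eA eB = M := by
    ext (i | i) (j | j) <;> rfl
  have hbordered : ∀ (a : A) (b : B), M.submatrix (Fin.cons (Sum.inl a) Sum.inr)
      (Fin.cons (Sum.inl b) Sum.inr) = S.submatrix (Fin.cons a g) (Fin.cons b g) := by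
    intro a b
    ext i j
    cases i using Fin.cases <;> cases j using Fin.cases <;> rfl
  rw [← rank_submatrix _ eA eB, hblocks,
    rank_fromBlocks_le_iff_det_submatrix_cons_eq_zero _ _ _ _ hD]
  simp only [← hM, hbordered, Subtype.forall]

/-- for a real `m × m` matrix `Σ` and pairwise disjoint
`A, B, C ⊆ [m]` with `Σ_{C,C}` invertible, the submatrix `Σ_{A∪C, B∪C}` has
rank at most `#C` iff `det Σ_{{a}∪C, {b}∪C} = 0` for all `a ∈ A`, `b ∈ B`. -/
theorem rank_le_card_iff_dets_vanish (m : ℕ) (S : Matrix (Fin m) (Fin m) ℝ)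
    (A B C : Finset (Fin m))
    (hAB : Disjoint A B) (hAC : Disjoint A C) (hBC : Disjoint B C)
    (hC : IsUnit (S.submatrix (fun i : C => (i : Fin m)) (fun j : C => (j : Fin m)))) :
    (S.submatrix (fun i : (A ∪ C : Finset (Fin m)) => (i : Fin m))
        (fun j : (B ∪ C : Finset (Fin m)) => (j : Fin m))).rank ≤ C.card ↔
    ∀ a ∈ A, ∀ b ∈ B,
      (S.submatrix (Fin.cons a (fun j : Fin C.card => C.orderEmbOfFin rfl j))
        (Fin.cons b (fun j : Fin C.card => C.orderEmbOfFin rfl j))).det = 0 :=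
  rank_le_card_iff_dets_vanish_general m S A B C hAC hBC hC
end

section
/- Let $\Omega$ be a real symmetric $4 \times 4$ matrix with $\omega_{12} = \omega_{13} = \omega_{14} = \omega_{23} = \omega_{24} = 0$ (so its only possibly nonzero off-diagonal entries are $\omega_{34} = \omega_{43}$), and let $\Lambda$ be the $4 \times 4$ real matrix whose only possibly nonzero entries are $\lambda_{12}, \lambda_{13}, \lambda_{23}, \lambda_{34}$ (in positions $(1,2), (1,3), (2,3), (3,4)$). Then $\mathrm{Id} - \Lambda$ is invertible, and the matrix $\Sigma = (\mathrm{Id} - \Lambda)^{-T}\, \Omega\, (\mathrm{Id} - \Lambda)^{-1}$ satisfies $\det \Sigma_{\{1,2\},\{3,4\}} = \sigma_{13}\sigma_{24} - \sigma_{14}\sigma_{23} = 0$. -/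
open Matrix

/-!
Write `M = 1 - Λ`, which is unitriangular because the graph is acyclic, and `Σ = M⁻ᵀ Ω M⁻¹`.
Then `Σ M = M⁻ᵀ Ω`. The only parent of `4` is `3`, so column `4` of `Σ M` is `Σ₄ - λ₃₄ Σ₃`; on
rows `1, 2` the right-hand side vanishes, because `M⁻ᵀ` is lower triangular and `Ω` has no entry
joining `4` to `1` or `2`. Hence `σ_{i4} = λ₃₄ σ_{i3}` for `i = 1, 2`, and the `2 × 2` minor has
proportional columns.
-/

namespace Matrix

variable {ι R : Type*} [LinearOrder ι] [CommRing R]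

lemma isUpperTriangular_one_sub {La : Matrix ι ι R} (hLa : ∀ i j, j ≤ i → La i j = 0) :
    (1 - La).IsUpperTriangular :=
  blockTriangular_one.sub fun i j hji => hLa i j hji.le

variable [Fintype ι]

noncomputable def semCovariance (Om La : Matrix ι ι R) : Matrix ι ι R :=
  ((1 - La)⁻¹)ᵀ * Om * (1 - La)⁻¹

variable {Om La : Matrix ι ι R}

lemma det_one_sub_eq_one (hLa : ∀ i j, j ≤ i → La i j = 0) : (1 - La).det = 1 := by
  rw [det_of_isUpperTriangular (isUpperTriangular_one_sub hLa)]
  exact Finset.prod_eq_one fun i _ => by simp [hLa i i le_rfl]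

lemma isUnit_one_sub (hLa : ∀ i j, j ≤ i → La i j = 0) : IsUnit (1 - La) := by
  rw [isUnit_iff_isUnit_det, det_one_sub_eq_one hLa]
  exact isUnit_one

lemma semCovariance_apply_of_unique_parent (hLa : ∀ i j, j ≤ i → La i j = 0) {i j p : ι}
    (hparent : ∀ k, k ≠ p → La k j = 0) (hOm : ∀ k, k ≤ i → Om k j = 0) :
    semCovariance Om La i j = semCovariance Om La i p * La p j := by
  set S := semCovariance Om La
  have hdet : IsUnit (1 - La).det := by rw [det_one_sub_eq_one hLa]; exact isUnit_one
  have hinv : (1 - La)⁻¹.IsUpperTriangular := by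
    have := invertibleOfIsUnitDet _ hdet
    exact blockTriangular_inv_of_blockTriangular (isUpperTriangular_one_sub hLa)
  have hSM : S * (1 - La) = ((1 - La)⁻¹)ᵀ * Om := nonsing_inv_mul_cancel_right _ _ hdet
  have hlhs : (S * (1 - La)) i j = S i j - S i p * La p j := by
    rw [mul_sub, mul_one, sub_apply, mul_apply,
      Finset.sum_eq_single p (fun k _ hk => by rw [hparent k hk, mul_zero]) (by simp)]
  have hrhs : (((1 - La)⁻¹)ᵀ * Om : Matrix ι ι R) i j = 0 := by
    rw [mul_apply]
    refine Finset.sum_eq_zero fun k _ => ?_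
    rcases le_or_gt k i with hki | hik
    · rw [hOm k hki, mul_zero]
    · rw [transpose_apply, hinv hik, zero_mul]
  rw [← sub_eq_zero, ← hlhs, hSM, hrhs]

end Matrix

theorem trek_separation_fourCycle_example_general (Om La : Matrix (Fin 4) (Fin 4) ℝ)
    (hOm14 : Om 0 3 = 0) (hOm24 : Om 1 3 = 0)
    (hLa : ∀ i j : Fin 4,
      ¬((i = 0 ∧ j = 1) ∨ (i = 0 ∧ j = 2) ∨ (i = 1 ∧ j = 2) ∨ (i = 2 ∧ j = 3)) →
      La i j = 0) :
    IsUnit (1 - La) ∧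
    ∀ S : Matrix (Fin 4) (Fin 4) ℝ, S = ((1 - La)⁻¹)ᵀ * Om * (1 - La)⁻¹ →
      S 0 2 * S 1 3 - S 0 3 * S 1 2 = 0 := by
  have hstrict : ∀ i j : Fin 4, j ≤ i → La i j = 0 := fun i j hji =>
    hLa i j (by revert i j; decide)
  have hparent : ∀ k : Fin 4, k ≠ 2 → La k 3 = 0 := fun k hk =>
    hLa k 3 (by revert k; decide)
  refine ⟨isUnit_one_sub hstrict, fun S hS => ?_⟩
  replace hS : S = semCovariance Om La := hS
  subst hS
  have hrow0 := semCovariance_apply_of_unique_parent (i := 0) hstrict hparent fun k hk => by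
    rwa [nonpos_iff_eq_zero.mp hk]
  have hrow1 := semCovariance_apply_of_unique_parent (i := 1) hstrict hparent fun k hk => by
    rcases (by revert k; decide : ∀ k : Fin 4, k ≤ 1 → k = 0 ∨ k = 1) k hk with rfl | rfl
    exacts [hOm14, hOm24]
  rw [hrow0, hrow1]
  ring

/-- for the linear structural equation model of the mixed graph
with directed edges `1→2, 1→3, 2→3, 3→4` and bidirected edge `3↔4`,
`Id - Λ` is invertible and the covariance matrix
`Σ = (Id - Λ)⁻ᵀ Ω (Id - Λ)⁻¹` satisfies
`det Σ_{{1,2},{3,4}} = σ₁₃σ₂₄ - σ₁₄σ₂₃ = 0` (trek separation). -/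
theorem trek_separation_fourCycle_example (Om La : Matrix (Fin 4) (Fin 4) ℝ)
    (hOmSymm : Om.IsSymm)
    (hOm12 : Om 0 1 = 0) (hOm13 : Om 0 2 = 0) (hOm14 : Om 0 3 = 0)
    (hOm23 : Om 1 2 = 0) (hOm24 : Om 1 3 = 0)
    (hLa : ∀ i j : Fin 4,
      ¬((i = 0 ∧ j = 1) ∨ (i = 0 ∧ j = 2) ∨ (i = 1 ∧ j = 2) ∨ (i = 2 ∧ j = 3)) →
      La i j = 0) :
    IsUnit (1 - La) ∧
    ∀ S : Matrix (Fin 4) (Fin 4) ℝ, S = ((1 - La)⁻¹)ᵀ * Om * (1 - La)⁻¹ →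
      S 0 2 * S 1 3 - S 0 3 * S 1 2 = 0 :=
  trek_separation_fourCycle_example_general Om La hOm14 hOm24 hLa
end
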